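/- arXiv:2007.14752 — 7 statements merged into one kernel-verified Lean document; each statement's English description precedes it below -/
import Mathlib

section
/- Let g(x) ∈ F_q[x] be a monic divisor of x^n - 1 of degree n-k. Let C_A be the cyclic code of length n over F_q generated by g(x), and let C̄_A be the cyclic code of length n over F_{q^d} generated by the same polynomial g(x), where d is the multiplicative order of q modulo n. Then the minimum Hamming distances of C_A and C̄_A are equal. -/
noncomputable section

open Polynomial
open scoped Pointwise

/-- The cyclic code of length `n` over `K` whose complete defining set is `Z ⊆ L`,
where `L` is an extension of `K` containing the `n`-th roots of unity:
codewords are those `c` whose associated polynomial vanishes on `Z`. -/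
def cyclicCodeOn (K L : Type) [Field K] [Field L] [Algebra K L]
    (n : ℕ) (Z : Set L) : Submodule K (Fin n → K) where
  carrier := {c | ∀ β ∈ Z, ∑ i : Fin n, algebraMap K L (c i) * β ^ (i : ℕ) = 0}
  add_mem' := by
    intro a b ha hb β hβ
    simp only [Pi.add_apply, map_add, add_mul, Finset.sum_add_distrib]
    rw [ha β hβ, hb β hβ, add_zero]
  zero_mem' := by intro β hβ; simp
  smul_mem' := by
    intro r a ha β hβ
    simp only [Pi.smul_apply, smul_eq_mul, map_mul, mul_assoc, ← Finset.mul_sum]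
    rw [ha β hβ, mul_zero]

/-- Cyclic code of length `n` over `F` with complete defining set `Z ⊆ F`. -/
abbrev cyclicCode (F : Type) [Field F] (n : ℕ) (Z : Set F) : Submodule F (Fin n → F) :=
  cyclicCodeOn F F n Z

/-- The dual code of a code `C ⊆ F^n` (under the standard inner product). -/
def dualSet (F : Type) [Field F] (n : ℕ) (C : Set (Fin n → F)) : Set (Fin n → F) :=
  {v | ∀ c ∈ C, ∑ i : Fin n, v i * c i = 0}

open Classical in
/-- Hamming weight of a vector. -/
def wt {F : Type} [Zero F] {n : ℕ} (c : Fin n → F) : ℕ :=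
  (Finset.univ.filter (fun i => c i ≠ 0)).card

/-- `d` is the minimum Hamming distance (= minimum nonzero weight) of the code `C`. -/
def IsMinDist {F : Type} [Zero F] {n : ℕ} (C : Set (Fin n → F)) (d : ℕ) : Prop :=
  (∃ c ∈ C, c ≠ 0 ∧ wt c = d) ∧ ∀ c ∈ C, c ≠ 0 → d ≤ wt c

open Classical in
/-- `C` has `(r, δ)`-locality: every coordinate lies in a recovery set `S` of size
at most `r + δ - 1` such that the punctured code `C|_S` has minimum distance `≥ δ`. -/
def HasLocality {F : Type} [Zero F] {n : ℕ} (C : Set (Fin n → F)) (r δ : ℕ) : Prop :=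
  ∀ i : Fin n, ∃ S : Finset (Fin n), i ∈ S ∧ S.card ≤ r + δ - 1 ∧
    ∀ c ∈ C, ∀ c' ∈ C, (∃ j ∈ S, c j ≠ c' j) →
      δ ≤ (S.filter (fun j => c j ≠ c' j)).card

/-- The polynomial `c₀ + c₁ x + ⋯ + c_{n-1} x^{n-1}` associated to a vector. -/
def vecPoly {F : Type} [Semiring F] {n : ℕ} (c : Fin n → F) : Polynomial F :=
  ∑ i : Fin n, Polynomial.C (c i) * Polynomial.X ^ (i : ℕ)

/-- The cyclic code of length `n` generated by `g(x)` (a divisor of `x^n - 1`). -/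
def codeOfGen (F : Type) [Field F] (n : ℕ) (g : Polynomial F) : Set (Fin n → F) :=
  {c | g ∣ vecPoly c}

/-- Ceiling division `⌈a / b⌉` on naturals. -/
def ceilDiv' (a b : ℕ) : ℕ := (a + b - 1) / b

/-- The code parameters meet the Singleton-like bound for `(r, δ)`-LRCs:
`d = n - k - (⌈k/r⌉ - 1)(δ - 1) + 1`. -/
def SingletonOpt (n k r δ d : ℕ) : Prop :=
  d = n - k - (ceilDiv' k r - 1) * (δ - 1) + 1

/-!
A codeword `c` over `L` is a `K`-vector of codewords over `K`: applying a `K`-linear functional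
`φ : L → K` coordinatewise preserves divisibility by `g`, because `g` has coefficients in `K`.
Choosing `φ` nonzero at one nonzero coordinate of `c` gives a nonzero codeword over `K` whose
support lies in that of `c`. Conversely, codewords over `K` are codewords over `L` of the same
weight, so the two minimum distances agree.
-/

namespace Polynomial

variable {R A : Type*} [CommSemiring R] [Semiring A] [Algebra R A]

def mapLinear (φ : A →ₗ[R] R) (p : A[X]) : R[X] :=
  ∑ m ∈ p.support, monomial m (φ (p.coeff m))

@[simp]
theorem coeff_mapLinear (φ : A →ₗ[R] R) (p : A[X]) (m : ℕ) :
    (p.mapLinear φ).coeff m = φ (p.coeff m) := by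
  rw [mapLinear, finsetSum_coeff, Finset.sum_eq_single m]
  · exact coeff_monomial_same m _
  · exact fun k _ hkm => coeff_monomial_of_ne _ hkm.symm
  · intro hm
    rw [notMem_support_iff.mp hm, map_zero, coeff_monomial_same]

theorem mapLinear_map_mul (φ : A →ₗ[R] R) (p : R[X]) (q : A[X]) :
    (p.map (algebraMap R A) * q).mapLinear φ = p * q.mapLinear φ := by
  ext m
  simp [coeff_mul, ← Algebra.smul_def]

theorem dvd_mapLinear_of_map_dvd (φ : A →ₗ[R] R) {p : R[X]} {q : A[X]}
    (h : p.map (algebraMap R A) ∣ q) : p ∣ q.mapLinear φ := by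
  obtain ⟨r, rfl⟩ := h
  exact ⟨r.mapLinear φ, mapLinear_map_mul φ p r⟩

end Polynomial

section Weight

variable {F F' : Type} [Zero F] [Zero F'] {n : ℕ}

theorem wt_comp_le (f : F → F') (hf : f 0 = 0) (c : Fin n → F) : wt (f ∘ c) ≤ wt c := by
  unfold wt
  refine Finset.card_le_card fun i => ?_
  simp only [Finset.mem_filter, Finset.mem_univ, true_and, Function.comp_apply]
  exact mt fun hc => hc ▸ hf

theorem IsMinDist.of_exists_wt_le {C : Set (Fin n → F)} {C' : Set (Fin n → F')} {dd : ℕ}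
    (h : IsMinDist C dd)
    (hC'C : ∀ c ∈ C', c ≠ 0 → ∃ v ∈ C, v ≠ 0 ∧ wt v ≤ wt c)
    (hCC' : ∀ v ∈ C, v ≠ 0 → ∃ c ∈ C', c ≠ 0 ∧ wt c ≤ wt v) :
    IsMinDist C' dd := by
  have hlower : ∀ c ∈ C', c ≠ 0 → dd ≤ wt c := fun c hc hc0 =>
    let ⟨v, hv, hv0, hle⟩ := hC'C c hc hc0
    (h.2 v hv hv0).trans hle
  obtain ⟨⟨v, hv, hv0, rfl⟩, -⟩ := h
  obtain ⟨c, hc, hc0, hle⟩ := hCC' v hv hv0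
  exact ⟨⟨c, hc, hc0, le_antisymm hle (hlower c hc hc0)⟩, hlower⟩

end Weight

section VecPoly

variable {n : ℕ}

theorem vecPoly_comp_ringHom {R S : Type} [Semiring R] [Semiring S] (f : R →+* S)
    (c : Fin n → R) : vecPoly (f ∘ c) = (vecPoly c).map f := by
  simp [vecPoly, Polynomial.map_sum]

theorem vecPoly_comp_linearMap {R A : Type} [CommSemiring R] [Semiring A] [Algebra R A]
    (φ : A →ₗ[R] R) (c : Fin n → A) : vecPoly (φ ∘ c) = (vecPoly c).mapLinear φ := by
  ext m
  simp [vecPoly, Polynomial.finsetSum_coeff, map_sum, apply_ite φ]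

end VecPoly

section CodeOfGen

variable {K L : Type} [Field K] [Field L] {n : ℕ} {g : K[X]}

theorem exists_wt_le_of_mem_codeOfGen (f : K →+* L) {v : Fin n → K} (hv : v ∈ codeOfGen K n g)
    (hv0 : v ≠ 0) : ∃ c ∈ codeOfGen L n (g.map f), c ≠ 0 ∧ wt c ≤ wt v := by
  refine ⟨f ∘ v, ?_, ?_, wt_comp_le f f.map_zero v⟩
  · rw [codeOfGen, Set.mem_ofPred_eq, vecPoly_comp_ringHom]
    exact Polynomial.map_dvd f hv
  · exact fun h => hv0 (f.injective.comp_left (h.trans (funext fun _ => f.map_zero.symm)))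

theorem exists_wt_le_of_mem_codeOfGen_map [Algebra K L] {c : Fin n → L}
    (hc : c ∈ codeOfGen L n (g.map (algebraMap K L))) (hc0 : c ≠ 0) :
    ∃ v ∈ codeOfGen K n g, v ≠ 0 ∧ wt v ≤ wt c := by
  obtain ⟨i, hi⟩ := Function.ne_iff.mp hc0
  obtain ⟨φ, hφ⟩ := Module.Projective.exists_dual_ne_zero K hi
  refine ⟨φ ∘ c, ?_, Function.ne_iff.mpr ⟨i, hφ⟩, wt_comp_le φ φ.map_zero c⟩
  rw [codeOfGen, Set.mem_ofPred_eq, vecPoly_comp_linearMap]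
  exact Polynomial.dvd_mapLinear_of_map_dvd φ hc

end CodeOfGen

theorem stmt1_general (K L : Type) [Field K] [Field L] [Algebra K L]
    (n : ℕ) (g : Polynomial K) (dd : ℕ) :
    IsMinDist (codeOfGen K n g) dd ↔
      IsMinDist (codeOfGen L n (g.map (algebraMap K L))) dd :=
  ⟨fun h => h.of_exists_wt_le (fun _ => exists_wt_le_of_mem_codeOfGen_map)
      (fun _ => exists_wt_le_of_mem_codeOfGen _),
    fun h => h.of_exists_wt_le (fun _ => exists_wt_le_of_mem_codeOfGen _)
      (fun _ => exists_wt_le_of_mem_codeOfGen_map)⟩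

/-- A cyclic code over `F_q` and the cyclic code over `F_{q^d}` generated
by the same polynomial have the same minimum distance, `d` being the order of `q` mod `n`. -/
theorem stmt1 (K L : Type) [Field K] [Fintype K] [Field L] [Fintype L] [Algebra K L]
    (n d : ℕ) (hn : 0 < n) (hd : 0 < d)
    (hcop : Nat.Coprime n (Fintype.card K))
    (hcard : Fintype.card L = Fintype.card K ^ d)
    (hord : Fintype.card K ^ d ≡ 1 [MOD n])
    (hmin : ∀ m, 0 < m → Fintype.card K ^ m ≡ 1 [MOD n] → d ≤ m)
    (g : Polynomial K) (hg : g.Monic) (hdvd : g ∣ Polynomial.X ^ n - 1)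
    (dd : ℕ) :
    IsMinDist (codeOfGen K n g) dd ↔
      IsMinDist (codeOfGen L n (g.map (algebraMap K L))) dd :=
  stmt1_general K L n g dd
end
end

section
/- Let u, m, b, δ be nonnegative integers with m, b, δ ≥ 1 and gcd(b, n) = 1. Let C be a cyclic code of length n over F_q and α a primitive n-th root of unity. If every element of the set {α^u, α^{u+b}, ..., α^{u+(mδ-1)b}} ∪ ⋃_{i=0}^{m} {α^{u+((m+i)δ+1)b}, α^{u+((m+i)δ+2)b}, ..., α^{u+((m+i)δ+δ-1)b}} is a root of the generator polynomial of C, then the minimum Hamming distance of C is at least mδ + δ. -/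
noncomputable section

open Polynomial
open scoped Pointwise

/-! Let `T` be the support of `c`, `x i = (α ^ b) ^ i` and `d i = c i * (α ^ u) ^ i`. The
hypotheses say that the weighted power sums `s j = ∑ i ∈ T, d i * x i ^ j` vanish for
`j < (2m+1)δ` except possibly at the multiples `(m+i)δ`, and the `s j` satisfy the linear
recurrence whose characteristic polynomial is the locator `σ = ∏ i ∈ T, (X - x i)`, of degree
`w = |T|`. Suppose `w < mδ + δ`. The `x i` are distinct, so by a Vandermonde argument
`s 0, …, s (w-1)` do not all vanish, which forces `s (mδ) ≠ 0`. The recurrence started at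
`(m-l)δ` then only sees the terms `σ_{l'δ} s_{(m+l'-l)δ}` with `l' ≥ l`, so by downward induction
`σ_{lδ} = 0` for every `l ≤ m`. For `l = 0` this says `σ(0) = 0`, contradicting `x i ≠ 0`. -/

open Finset

section WeightedPowerSum

variable {R ι : Type*} [CommRing R] (T : Finset ι) (d x : ι → R)

def weightedPowerSum (j : ℕ) : R := ∑ i ∈ T, d i * x i ^ j

def locator : R[X] := ∏ i ∈ T, (X - C (x i))

theorem sum_coeff_mul_weightedPowerSum_add {p : R[X]} {N : ℕ} (hN : p.natDegree < N) (j : ℕ) :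
    ∑ k ∈ range N, p.coeff k * weightedPowerSum T d x (j + k) =
      ∑ i ∈ T, d i * x i ^ j * p.eval (x i) := by
  simp_rw [weightedPowerSum, mul_sum, eval_eq_sum_range' hN, mul_sum]
  rw [sum_comm]
  refine sum_congr rfl fun i _ => sum_congr rfl fun k _ => ?_
  ring

theorem sum_coeff_locator_mul_weightedPowerSum_add [Nontrivial R] (j : ℕ) :
    ∑ k ∈ range (#T + 1), (locator T x).coeff k * weightedPowerSum T d x (j + k) = 0 := by
  rw [sum_coeff_mul_weightedPowerSum_add T d x (by simp [locator]) j]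
  exact sum_eq_zero fun i hi => by simp [locator, eval_prod, prod_eq_zero hi]

theorem locator_coeff_zero_ne_zero [IsDomain R] (hx : ∀ i ∈ T, x i ≠ 0) :
    (locator T x).coeff 0 ≠ 0 := by
  simpa [locator, coeff_zero_eq_eval_zero, eval_prod, prod_ne_zero_iff] using hx

theorem exists_weightedPowerSum_ne_zero [IsDomain R] (hx : Set.InjOn x T)
    (hd : ∀ i ∈ T, d i ≠ 0) (hT : T.Nonempty) : ∃ j < #T, weightedPowerSum T d x j ≠ 0 := by
  classical
  obtain ⟨i₀, hi₀⟩ := hT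
  by_contra! h
  -- the locator of `T.erase i₀` vanishes at every `x i` except `x i₀`
  have hdeg : (locator (T.erase i₀) x).natDegree < #T := by
    simp [locator, card_erase_of_mem hi₀, card_pos.2 ⟨i₀, hi₀⟩]
  have key := sum_coeff_mul_weightedPowerSum_add T d x hdeg 0
  rw [sum_eq_zero fun k hk => by rw [zero_add, h k (mem_range.1 hk), mul_zero],
    sum_eq_single_of_mem i₀ hi₀ fun i hi hne => by
      simp [locator, eval_prod, prod_eq_zero (mem_erase.2 ⟨hne, hi⟩)]] at key
  simp only [pow_zero, mul_one, locator, eval_prod, eval_sub, eval_X, eval_C] at key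
  refine (mul_ne_zero (hd i₀ hi₀) (prod_ne_zero_iff.2 fun i hi => ?_)) key.symm
  exact sub_ne_zero.2 fun h => (mem_erase.1 hi).1 (hx hi₀ (mem_of_mem_erase hi) h).symm

end WeightedPowerSum

theorem eq_zero_of_not_dvd {M : Type*} [Zero M] {s : ℕ → M} {m δ : ℕ}
    (h2 : ∀ i ≤ m, ∀ t, 1 ≤ t → t ≤ δ - 1 → s ((m + i) * δ + t) = 0)
    {j : ℕ} (hmj : m * δ ≤ j) (hj : j < (2 * m + 1) * δ) (hdvd : ¬ δ ∣ j) : s j = 0 := by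
  have hδ : 0 < δ := Nat.pos_of_mul_pos_left (Nat.zero_lt_of_lt hj)
  have hq : m ≤ j / δ := (Nat.le_div_iff_mul_le hδ).2 hmj
  have hq' : j / δ < 2 * m + 1 := (Nat.div_lt_iff_lt_mul hδ).2 hj
  have ht : j % δ ≠ 0 := fun h => hdvd (Nat.dvd_of_mod_eq_zero h)
  have ht' := Nat.mod_lt j hδ
  have := h2 (j / δ - m) (by omega) (j % δ) (by omega) (by omega)
  rwa [Nat.add_sub_cancel' hq, Nat.div_add_mod'] at this

theorem coeff_mul_eq_zero_of_recurrence {R : Type*} [Semiring R] [NoZeroDivisors R]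
    {σ : R[X]} {s : ℕ → R} {m δ w : ℕ} (hσ : σ.natDegree ≤ w) (hw : w < (m + 1) * δ)
    (hrec : ∀ j, ∑ k ∈ range (w + 1), σ.coeff k * s (j + k) = 0)
    (h1 : ∀ j < m * δ, s j = 0) (h2 : ∀ j < (2 * m + 1) * δ, m * δ ≤ j → ¬ δ ∣ j → s j = 0)
    (hsm : s (m * δ) ≠ 0) {l : ℕ} (hl : l ≤ m) : σ.coeff (l * δ) = 0 := by
  have hδ : 0 < δ := Nat.pos_of_mul_pos_left (Nat.zero_lt_of_lt hw)
  induction l using Nat.strong_decreasing_induction with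
  | base => exact ⟨m, fun l hl hl' => absurd hl' (Nat.not_le.2 hl)⟩
  | step l ih =>
    rcases lt_or_ge w (l * δ) with hlw | hlw
    · exact coeff_eq_zero_of_natDegree_lt (hσ.trans_lt hlw)
    have key := hrec ((m - l) * δ)
    rw [sum_eq_single_of_mem (l * δ) (mem_range.2 (Nat.lt_succ_of_le hlw)) fun k hk hkl => ?_,
      ← add_mul, Nat.sub_add_cancel hl] at key
    · exact (mul_eq_zero.1 key).resolve_right hsm
    have hk := Nat.lt_succ_iff.1 (mem_range.1 hk)
    rcases lt_or_ge ((m - l) * δ + k) (m * δ) with hlow | hlow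
    · rw [h1 _ hlow, mul_zero]
    by_cases hdvd : δ ∣ k
    · obtain ⟨l', rfl⟩ := hdvd
      rw [mul_comm δ l'] at hk hkl hlow ⊢
      rw [← add_mul] at hlow
      have hl' : l ≤ l' := by have := Nat.le_of_mul_le_mul_right hlow hδ; omega
      have hl'm : l' ≤ m := Nat.lt_succ_iff.1 (Nat.lt_of_mul_lt_mul_right (hk.trans_lt hw))
      rw [ih l' (lt_of_le_of_ne hl' fun h => hkl (h ▸ rfl)) hl'm, zero_mul]
    · have hbound : (m - l) * δ + k < (2 * m + 1) * δ := by
        have : (m - l) * δ ≤ m * δ := Nat.mul_le_mul_right δ (Nat.sub_le m l)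
        nlinarith
      rw [h2 _ hbound hlow fun h => hdvd ((Nat.dvd_add_right (dvd_mul_left δ _)).1 h), mul_zero]

theorem le_card_of_weightedPowerSum_eq_zero {R ι : Type*} [CommRing R] [IsDomain R]
    {T : Finset ι} {d x : ι → R} {m δ : ℕ} (hx : Set.InjOn x T) (hx0 : ∀ i ∈ T, x i ≠ 0)
    (hd : ∀ i ∈ T, d i ≠ 0) (hT : T.Nonempty) (h1 : ∀ j < m * δ, weightedPowerSum T d x j = 0)
    (h2 : ∀ i ≤ m, ∀ t, 1 ≤ t → t ≤ δ - 1 → weightedPowerSum T d x ((m + i) * δ + t) = 0) :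
    m * δ + δ ≤ #T := by
  by_contra! hw
  have h2' : ∀ j < (2 * m + 1) * δ, m * δ ≤ j → ¬ δ ∣ j → weightedPowerSum T d x j = 0 :=
    fun j hj hmj hdvd => eq_zero_of_not_dvd h2 hmj hj hdvd
  by_cases hsm : weightedPowerSum T d x (m * δ) = 0
  · obtain ⟨j, hj, hsj⟩ := exists_weightedPowerSum_ne_zero T d x hx hd hT
    rcases lt_trichotomy j (m * δ) with hjm | rfl | hjm
    · exact hsj (h1 j hjm)
    · exact hsj hsm
    · exact hsj (h2' j (by nlinarith) hjm.le
        (Nat.not_dvd_of_lt_of_lt_mul_succ (k := m) (by rwa [mul_comm]) (by nlinarith)))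
  · refine locator_coeff_zero_ne_zero T x hx0 ?_
    simpa using coeff_mul_eq_zero_of_recurrence (by simp [locator]) (by nlinarith)
      (sum_coeff_locator_mul_weightedPowerSum_add T d x) h1 h2' hsm (Nat.zero_le m)

theorem eval_map_vecPoly_pow_eq_weightedPowerSum {F L : Type} [Field F] [Field L] [Algebra F L]
    {n : ℕ} (c : Fin n → F) [DecidablePred fun i => c i ≠ 0] (α : L) (u b j : ℕ) :
    ((vecPoly c).map (algebraMap F L)).eval (α ^ (u + j * b)) =
      weightedPowerSum {i | c i ≠ 0} (fun i => algebraMap F L (c i) * (α ^ u) ^ (i : ℕ))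
        (fun i => (α ^ b) ^ (i : ℕ)) j := by
  rw [weightedPowerSum, sum_filter_of_ne fun i _ h => ?_]
  · simp only [vecPoly, Polynomial.map_sum, Polynomial.map_mul, Polynomial.map_pow, map_C, map_X,
      eval_finsetSum, eval_mul, eval_pow, eval_C, eval_X]
    refine sum_congr rfl fun i _ => ?_
    ring
  · rintro hc; simp [hc] at h

theorem stmt2_general (F L : Type) [Field F] [Field L] [Algebra F L]
    (n u m b δ : ℕ)
    (hcop : Nat.Coprime b n)
    (α : L) (hα : IsPrimitiveRoot α n)
    (g : Polynomial F)
    (h1 : ∀ j < m * δ, (g.map (algebraMap F L)).IsRoot (α ^ (u + j * b)))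
    (h2 : ∀ i ≤ m, ∀ t, 1 ≤ t → t ≤ δ - 1 →
      (g.map (algebraMap F L)).IsRoot (α ^ (u + ((m + i) * δ + t) * b)))
    (c : Fin n → F) (hc : c ∈ codeOfGen F n g) (hc0 : c ≠ 0) :
    m * δ + δ ≤ wt c := by
  classical
  have hsyndrome : ∀ j, (g.map (algebraMap F L)).IsRoot (α ^ (u + j * b)) →
      weightedPowerSum ({i | c i ≠ 0} : Finset (Fin n))
        (fun i => algebraMap F L (c i) * (α ^ u) ^ (i : ℕ)) (fun i => (α ^ b) ^ (i : ℕ)) j = 0 :=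
    fun j hj => by
    rw [← eval_map_vecPoly_pow_eq_weightedPowerSum]
    exact hj.dvd (Polynomial.map_dvd _ hc)
  have hα0 (i : Fin n) : α ≠ 0 := hα.ne_zero i.pos.ne'
  have hwt : wt c = #({i | c i ≠ 0} : Finset (Fin n)) := by unfold wt; congr
  rw [hwt]
  refine le_card_of_weightedPowerSum_eq_zero (fun i _ i' _ h => ?_) (fun i _ => ?_)
    (fun i hi => ?_) ?_ (fun j hj => hsyndrome j (h1 j hj))
    (fun i hi t ht ht' => hsyndrome _ (h2 i hi t ht ht'))
  · exact Fin.ext ((hα.pow_of_coprime b hcop).pow_inj i.isLt i'.isLt h)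
  · exact pow_ne_zero _ (pow_ne_zero _ (hα0 i))
  · exact mul_ne_zero (by simpa using hi) (pow_ne_zero _ (pow_ne_zero _ (hα0 i)))
  · obtain ⟨i, hi⟩ := Function.ne_iff.1 hc0
    exact ⟨i, by simpa using hi⟩

/-- generalized Betti–Sala bound. If the complete defining set of a cyclic
code contains `{α^{u+jb} : 0 ≤ j ≤ mδ-1} ∪ ⋃_{i=0}^m {α^{u+((m+i)δ+t)b} : 1 ≤ t ≤ δ-1}`,
then every nonzero codeword has weight at least `mδ + δ`. -/
theorem stmt2 (F L : Type) [Field F] [Field L] [Algebra F L]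
    (n u m b δ : ℕ) (hn : 0 < n) (hm : 0 < m) (hb : 0 < b) (hδ : 0 < δ)
    (hcop : Nat.Coprime b n) (hcopnq : Nat.Coprime n (ringChar F))
    (α : L) (hα : IsPrimitiveRoot α n)
    (g : Polynomial F) (hgdvd : g ∣ Polynomial.X ^ n - 1)
    (h1 : ∀ j < m * δ, (g.map (algebraMap F L)).IsRoot (α ^ (u + j * b)))
    (h2 : ∀ i ≤ m, ∀ t, 1 ≤ t → t ≤ δ - 1 →
      (g.map (algebraMap F L)).IsRoot (α ^ (u + ((m + i) * δ + t) * b)))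
    (c : Fin n → F) (hc : c ∈ codeOfGen F n g) (hc0 : c ≠ 0) :
    m * δ + δ ≤ wt c :=
  stmt2_general F L n u m b δ hcop α hα g h1 h2 c hc hc0
end
end

section
/- Let n divide q - 1 and let C be a cyclic code of length n over F_q with complete defining set Z, a subset of the group R_n of n-th roots of unity in F_q. Suppose Z contains a coset of a subgroup of R_n of order ℓ (where ℓ divides n), and R_n \ Z contains a set of the form {β^i, β^{i+1}, ..., β^{i + n/ℓ - 2}} for some primitive n-th root of unity β (a consecutive set of length n/ℓ - 1). Then the minimum Hamming distance of the dual code of C is exactly n/ℓ. -/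
/-! With `ζ = α ^ (n / ℓ)`, a primitive `ℓ`-th root of unity, the vector `v` with `v k = γ ^ k`
for `ℓ ∣ k` and `v k = 0` otherwise satisfies `ℓ • v = ∑_{t < ℓ} ((γ ζ ^ t) ^ k)ₖ`. Each summand is
orthogonal to `C` because `γ ζ ^ t ∈ Z`, so `v` is a dual codeword of weight `n / ℓ`.
Conversely, for `δ ∈ R_n` with `δ⁻¹ ∉ Z` the geometric vector `(δ ^ k)ₖ` lies in `C`, so every dual
codeword vanishes, as a polynomial, at the `n / ℓ - 1` consecutive powers `β⁻¹ ^ (i + j)`, and the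
BCH bound gives it weight at least `n / ℓ`. -/

noncomputable section

open Polynomial
open scoped Pointwise

open Finset

lemma geom_sum_eq_zero_of_pow_eq_one {R : Type*} [CommRing R] [IsDomain R] {x : R} {n : ℕ}
    (hx : x ≠ 1) (hxn : x ^ n = 1) : ∑ i ∈ range n, x ^ i = 0 := by
  have h := geom_sum_mul x n
  rw [hxn, sub_self] at h
  exact (mul_eq_zero.mp h).resolve_right (sub_ne_zero.mpr hx)

lemma card_filter_fin_eq_count (n : ℕ) (p : ℕ → Prop) [DecidablePred p] :
    #{k : Fin n | p k} = Nat.count p n := by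
  rw [Nat.count_eq_card_filter_range, ← card_map Fin.valEmbedding, map_filter',
    Fin.map_valEmbedding_univ]
  congr 1
  ext x
  simp only [mem_filter, mem_Iio, Fin.valEmbedding_apply, mem_range]
  constructor
  · rintro ⟨hx, a, ha, rfl⟩
    exact ⟨hx, ha⟩
  · rintro ⟨hx, hp⟩
    exact ⟨hx, ⟨x, hx⟩, hp, rfl⟩

lemma card_filter_fin_dvd {n ℓ : ℕ} (hl : ℓ ∣ n) (hℓ : 0 < ℓ) :
    #{k : Fin n | ℓ ∣ (k : ℕ)} = n / ℓ := by
  simpa [card_filter_fin_eq_count, Nat.modEq_zero_iff_dvd, Nat.mod_eq_zero_of_dvd hl] using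
    Nat.count_modEq_card n hℓ 0

section Vandermonde

variable {ι F : Type*} [Field F]

lemma sum_mul_eval_eq_zero_of_natDegree_lt (s : Finset ι) (w x : ι → F) {m : ℕ}
    (h : ∀ j < m, ∑ k ∈ s, w k * x k ^ j = 0) {p : F[X]} (hp : p.natDegree < m) :
    ∑ k ∈ s, w k * p.eval (x k) = 0 := by
  simp_rw [eval_eq_sum_range' hp, mul_sum]
  rw [sum_comm]
  refine sum_eq_zero fun j hj => ?_
  simp_rw [mul_left_comm (w _), ← mul_sum, h j (mem_range.mp hj), mul_zero]

open Classical in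
lemma lt_card_support_of_sum_mul_pow_eq_zero [Fintype ι] {x : ι → F} (hx : Function.Injective x)
    {w : ι → F} (hw : w ≠ 0) {m : ℕ} (h : ∀ j < m, ∑ k, w k * x k ^ j = 0) :
    m < #{k | w k ≠ 0} := by
  set S : Finset ι := {k | w k ≠ 0}
  obtain ⟨k₀, hk₀ : w k₀ ≠ 0⟩ := Function.ne_iff.mp hw
  have hk₀S : k₀ ∈ S := mem_filter.mpr ⟨mem_univ _, hk₀⟩
  by_contra! hSm
  have hdeg : (Lagrange.basis S x k₀).natDegree < m := by
    rw [Lagrange.natDegree_basis hx.injOn hk₀S]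
    have := card_pos.mpr ⟨k₀, hk₀S⟩
    omega
  apply hk₀
  rw [← sum_mul_eval_eq_zero_of_natDegree_lt univ w x h hdeg, sum_eq_single k₀,
    Lagrange.eval_basis_self hx.injOn hk₀S, mul_one]
  · intro k _ hk
    by_cases hkS : k ∈ S
    · rw [Lagrange.eval_basis_of_ne (Ne.symm hk) hkS, mul_zero]
    · rw [of_not_not fun h => hkS (mem_filter.mpr ⟨mem_univ _, h⟩), zero_mul]
  · exact fun h => (h (mem_univ _)).elim

end Vandermonde

/-- The BCH bound. -/
lemma lt_wt_of_sum_mul_pow_eq_zero {F : Type} [Field F] {n : ℕ} {b : F}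
    (hb : IsPrimitiveRoot b n) {v : Fin n → F} (hv : v ≠ 0) (i m : ℕ)
    (h : ∀ j < m, ∑ k : Fin n, v k * (b ^ (i + j)) ^ (k : ℕ) = 0) : m < wt v := by
  obtain ⟨k₀, -⟩ := Function.ne_iff.mp hv
  have hb0 : b ≠ 0 := hb.ne_zero k₀.pos.ne'
  have hsupp : wt v = wt (fun k : Fin n => v k * b ^ (i * k)) := by
    simp only [wt]
    congr 1
    ext k
    simp [hb0]
  rw [hsupp]
  refine lt_card_support_of_sum_mul_pow_eq_zero (x := fun k : Fin n => b ^ (k : ℕ))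
    (fun k k' hk => Fin.ext (hb.pow_inj k.isLt k'.isLt hk)) ?_ fun j hj => ?_
  · intro h0
    exact hv (funext fun k => by simpa [hb0] using congrFun h0 k)
  · rw [← h j hj]
    refine sum_congr rfl fun k _ => ?_
    rw [mul_assoc, ← pow_mul, ← pow_mul, ← pow_add]
    ring_nf

lemma mem_cyclicCode_iff {F : Type} [Field F] {n : ℕ} {Z : Set F} {c : Fin n → F} :
    c ∈ cyclicCode F n Z ↔ ∀ ζ ∈ Z, ∑ k : Fin n, c k * ζ ^ (k : ℕ) = 0 :=
  Iff.rfl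

lemma pow_mem_cyclicCode {F : Type} [Field F] {n : ℕ} {Z : Set F}
    (hZ : Z ⊆ {x : F | x ^ n = 1}) {δ : F} (hδ : δ ^ n = 1) (hδZ : δ⁻¹ ∉ Z) :
    (fun k : Fin n => δ ^ (k : ℕ)) ∈ cyclicCode F n Z := by
  rw [mem_cyclicCode_iff]
  intro ζ hζ
  have h1 : δ * ζ ≠ 1 := fun h => hδZ (eq_inv_of_mul_eq_one_right h ▸ hζ)
  have hn : (δ * ζ) ^ n = 1 := by rw [mul_pow, hδ, hZ hζ, one_mul]
  simp_rw [← mul_pow]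
  rw [Fin.sum_univ_eq_sum_range (fun k => (δ * ζ) ^ k)]
  exact geom_sum_eq_zero_of_pow_eq_one h1 hn

lemma sum_mul_pow_pow_eq_ite {F : Type*} [Field F] {ℓ : ℕ} {ζ : F} (hζ : IsPrimitiveRoot ζ ℓ)
    (γ : F) (k : ℕ) :
    ∑ t ∈ range ℓ, (γ * ζ ^ t) ^ k = if ℓ ∣ k then ℓ * γ ^ k else 0 := by
  simp_rw [mul_pow, ← mul_sum, ← pow_mul, mul_comm _ k, pow_mul]
  split_ifs with hk
  · simp [(hζ.pow_eq_one_iff_dvd k).mpr hk, mul_comm]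
  · rw [geom_sum_eq_zero_of_pow_eq_one (mt (hζ.pow_eq_one_iff_dvd k).mp hk), mul_zero]
    rw [← pow_mul, mul_comm, pow_mul, hζ.pow_eq_one, one_pow]

lemma mem_dualSet_cyclicCode_of_coset {F : Type} [Field F] {n ℓ : ℕ} (hℓ : 0 < ℓ) {ζ : F}
    (hζ : IsPrimitiveRoot ζ ℓ) {Z : Set F} {γ : F} (hcoset : ∀ t < ℓ, γ * ζ ^ t ∈ Z) :
    (fun k : Fin n => if ℓ ∣ (k : ℕ) then γ ^ (k : ℕ) else 0) ∈
      dualSet F n (cyclicCode F n Z : Set (Fin n → F)) := by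
  intro c hc
  have : NeZero ℓ := ⟨hℓ.ne'⟩
  refine (mul_eq_zero.mp ?_).resolve_left hζ.neZero'.out
  calc (ℓ : F) * ∑ k : Fin n, (if ℓ ∣ (k : ℕ) then γ ^ (k : ℕ) else 0) * c k
      = ∑ t ∈ range ℓ, ∑ k : Fin n, c k * (γ * ζ ^ t) ^ (k : ℕ) := by
        rw [sum_comm, mul_sum]
        refine sum_congr rfl fun k _ => ?_
        rw [← mul_sum, sum_mul_pow_pow_eq_ite hζ]
        split_ifs <;> ring
    _ = 0 := sum_eq_zero fun t ht => hc _ (hcoset t (mem_range.mp ht))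

lemma wt_ite_dvd {F : Type} [Field F] {n ℓ : ℕ} (hl : ℓ ∣ n) (hℓ : 0 < ℓ) {γ : F} (hγ : γ ≠ 0) :
    wt (fun k : Fin n => if ℓ ∣ (k : ℕ) then γ ^ (k : ℕ) else 0) = n / ℓ := by
  rw [← card_filter_fin_dvd hl hℓ, wt]
  congr 1
  ext k
  simp [hγ]

theorem stmt3_general (F : Type) [Field F] (n ℓ : ℕ) (hn : 0 < n) (hl : ℓ ∣ n)
    (α : F) (hα : IsPrimitiveRoot α n)
    (Z : Set F) (hZ : Z ⊆ {x : F | x ^ n = 1})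
    (γ : F) (hγ : γ ^ n = 1) (hcoset : ∀ i < ℓ, γ * (α ^ (n / ℓ)) ^ i ∈ Z)
    (β : F) (hβ : IsPrimitiveRoot β n) (i : ℕ)
    (hconsec : ∀ j < n / ℓ - 1, β ^ (i + j) ∉ Z) :
    IsMinDist (dualSet F n (cyclicCode F n Z : Set (Fin n → F))) (n / ℓ) := by
  have hℓ : 0 < ℓ := Nat.pos_of_dvd_of_pos hl hn
  have hζ : IsPrimitiveRoot (α ^ (n / ℓ)) ℓ := hα.pow hn (Nat.div_mul_cancel hl).symm
  have hγ0 : γ ≠ 0 := by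
    rintro rfl
    simp [hn.ne'] at hγ
  refine ⟨⟨_, mem_dualSet_cyclicCode_of_coset hℓ hζ hcoset, fun h => ?_,
    wt_ite_dvd hl hℓ hγ0⟩, fun v hv hv0 => ?_⟩
  · simpa using congrFun h ⟨0, hn⟩
  · -- `((β⁻¹ ^ (i + j)) ^ k)ₖ` is a codeword of `C` since `β ^ (i + j) ∉ Z`
    have := lt_wt_of_sum_mul_pow_eq_zero hβ.inv hv0 i (n / ℓ - 1) fun j hj => hv _ <|
      pow_mem_cyclicCode hZ (by rw [← pow_mul, mul_comm, pow_mul, hβ.inv.pow_eq_one, one_pow])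
        (by rw [inv_pow, inv_inv]; exact hconsec j hj)
    omega

/-- if the defining set `Z` contains a coset of a subgroup of order `ℓ`
of the `n`-th roots of unity, and the complement `R_n \ Z` contains a consecutive set
of length `n/ℓ - 1`, then the dual code has minimum distance exactly `n/ℓ`. -/
theorem stmt3 (F : Type) [Field F] [Fintype F] (n ℓ : ℕ) (hn : 0 < n)
    (hdvd : n ∣ Fintype.card F - 1) (hl : ℓ ∣ n) (hl0 : 0 < ℓ)
    (α : F) (hα : IsPrimitiveRoot α n)
    (Z : Set F) (hZ : Z ⊆ {x : F | x ^ n = 1})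
    (γ : F) (hγ : γ ^ n = 1) (hcoset : ∀ i < ℓ, γ * (α ^ (n / ℓ)) ^ i ∈ Z)
    (β : F) (hβ : IsPrimitiveRoot β n) (i : ℕ)
    (hconsec : ∀ j < n / ℓ - 1, β ^ (i + j) ∉ Z) :
    IsMinDist (dualSet F n (cyclicCode F n Z : Set (Fin n → F))) (n / ℓ) :=
  stmt3_general F n ℓ hn hl α hα Z hZ γ hγ hcoset β hβ i hconsec
end
end

section
/- Let C̄ be an [n, k] cyclic code over F_{q^d}, where d is the order of q modulo n, and let C be the subfield subcode of C̄ over F_q (codewords of C̄ all of whose entries lie in F_q). If C̄ has (r, δ)-locality, then C has (r, δ)-locality. -/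
noncomputable section

open Polynomial
open scoped Pointwise

/-- the subfield subcode over `F_q` of a cyclic code over `F_{q^d}` with
`(r,δ)`-locality also has `(r,δ)`-locality. -/
theorem stmt5 (K L : Type) [Field K] [Fintype K] [Field L] [Fintype L] [Algebra K L]
    (n d r δ : ℕ) (hn : 0 < n) (hd : 0 < d)
    (hcard : Fintype.card L = Fintype.card K ^ d)
    (hord : Fintype.card K ^ d ≡ 1 [MOD n])
    (hmin : ∀ m, 0 < m → Fintype.card K ^ m ≡ 1 [MOD n] → d ≤ m)
    (Cbar : Submodule L (Fin n → L))
    (hcyc : ∀ c ∈ Cbar,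
      (fun i : Fin n => c ⟨((i : ℕ) + 1) % n, Nat.mod_lt _ hn⟩) ∈ Cbar)
    (hloc : HasLocality (Cbar : Set (Fin n → L)) r δ) :
    HasLocality {c : Fin n → K | (fun i => algebraMap K L (c i)) ∈ Cbar} r δ := by
  intro i
  obtain ⟨S, hiS, hcard', hδ⟩ := hloc i
  refine ⟨S, hiS, hcard', ?_⟩
  intro c hc c' hc' ⟨j, hjS, hj⟩
  have h := hδ _ hc _ hc' ⟨j, hjS, fun h => hj ((algebraMap K L).injective h)⟩
  refine le_trans h (Finset.card_le_card ?_)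
  intro x hx
  simp only [Finset.mem_filter] at hx ⊢
  exact ⟨hx.1, fun h => hx.2 (congrArg _ h)⟩
end
end

section
/- Let n | q - 1, δ ≥ 2, b coprime to n, and α a primitive n-th root of unity in F_q. Let A = {α^t, α^{t+b}, ..., α^{t+(m-1)b}} ∪ {α^{t+i_1 b}, ..., α^{t+i_s b}} where m - 1 + δ ≤ i_1 < i_2 < ... < i_s ≤ n - δ and i_{ℓ+1} - i_ℓ ≥ δ for all ℓ, and let B = {1, α^b, α^{2b}, ..., α^{(δ-2)b}}. Then the cyclic code C_{AB} with complete defining set AB has dimension k = n - m + 1 - (s+1)(δ-1), and has (d_A⊥ - δ + 1, δ)-locality where d_A⊥ is the minimum distance of the dual of the cyclic code with complete defining set A. Moreover, if ⌈k/r⌉ = s + 1 with r = d_A⊥ - δ + 1, then the minimum distance of C_{AB} equals m + δ - 1 and C_{AB} meets the Singleton-like bound d ≤ n - k - (⌈k/r⌉ - 1)(δ - 1) + 1. -/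
noncomputable section

open Polynomial
open scoped Pointwise

/-!
The code `C_{AB}` has the complete defining set `{α^t γ^e : e ∈ E}` with `γ = α^b` a primitive
`n`-th root of unity, where `E` consists of one run of `m + δ - 2` consecutive exponents and `s`
disjoint runs of `δ - 1`; its dimension is `n - |E|` because distinct evaluation points impose
independent conditions. For locality, a nonzero dual codeword `v` of `C_A` and its cyclic shifts
are check vectors: for `c ∈ C_{AB}` the product `v(· - j) c` lies in `C_B`, so by the BCH bound
the restriction of `C_{AB}` to the support of `v(· - j)` has distance `≥ δ`. The BCH bound on
the long run gives `d ≥ m + δ - 1`, and the Singleton-like bound for `(r, δ)`-LRCs, proved by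
greedily shortening along recovery sets, gives `d ≤ n - k - s (δ - 1) + 1 = m + δ - 1` once
`⌈k / r⌉ = s + 1`.
-/

open Finset

section Weight

variable {F : Type} [Zero F] {n : ℕ}

theorem wt_eq_card_filter {c : Fin n → F} [DecidablePred fun i : Fin n => c i ≠ 0] :
    wt c = #(univ.filter fun i => c i ≠ 0) := by
  unfold wt
  congr 1
  exact filter_congr_decidable ..

theorem wt_add_card_le_of_eq_zero {c : Fin n → F} {T : Finset (Fin n)}
    (hc : ∀ i ∈ T, c i = 0) : wt c + #T ≤ n := by
  classical
  have hsub : univ.filter (fun i => c i ≠ 0) ⊆ univ \ T := fun i hi =>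
    mem_sdiff.2 ⟨mem_univ i, fun hiT => (mem_filter.1 hi).2 (hc i hiT)⟩
  calc wt c + #T ≤ #(univ \ T) + #T := by rw [wt_eq_card_filter]; gcongr
    _ = n := by rw [card_sdiff_add_card_eq_card (subset_univ T), card_univ, Fintype.card_fin]

theorem wt_comp_sub [NeZero n] (v : Fin n → F) (j : Fin n) : wt (fun x => v (x - j)) = wt v := by
  classical
  rw [wt_eq_card_filter, wt_eq_card_filter]
  exact card_equiv (Equiv.subRight j) fun x => by simp

end Weight

section SingletonLike

variable {F : Type} [Field F] {n r δ : ℕ}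

/-- The shortening of `C` at `T`, with the coordinates of `T` kept (as zeros). -/
def vanishOn (C : Submodule F (Fin n → F)) (T : Finset (Fin n)) : Submodule F (Fin n → F) :=
  C ⊓ Submodule.pi (T : Set (Fin n)) fun _ => ⊥

variable {C : Submodule F (Fin n → F)} {T T' : Finset (Fin n)}

theorem mem_vanishOn {c : Fin n → F} : c ∈ vanishOn C T ↔ c ∈ C ∧ ∀ i ∈ T, c i = 0 := by
  simp [vanishOn, Submodule.mem_pi]

theorem vanishOn_empty : vanishOn C ∅ = C := by
  ext c
  simp [mem_vanishOn]

theorem vanishOn_anti (h : T ⊆ T') : vanishOn C T' ≤ vanishOn C T := fun _ hc =>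
  mem_vanishOn.2 ⟨(mem_vanishOn.1 hc).1, fun i hi => (mem_vanishOn.1 hc).2 i (h hi)⟩

theorem exists_mem_vanishOn_ne_zero (h : 0 < Module.finrank F (vanishOn C T)) :
    ∃ c ∈ vanishOn C T, c ≠ 0 :=
  Submodule.exists_mem_ne_zero_of_ne_bot fun hbot => by
    rw [hbot, finrank_bot] at h
    exact lt_irrefl 0 h

theorem finrank_vanishOn_le (h : T ⊆ T') :
    Module.finrank F (vanishOn C T) ≤ Module.finrank F (vanishOn C T') + #(T' \ T) := by
  set f := (LinearMap.funLeft F F (Subtype.val : ↥(T' \ T) → Fin n)).domRestrict (vanishOn C T)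
  have hker : LinearMap.ker f = (vanishOn C T').comap (vanishOn C T).subtype := by
    ext ⟨c, hc⟩
    simp only [f, LinearMap.mem_ker, LinearMap.domRestrict_apply, Submodule.mem_comap,
      Submodule.subtype_apply, funext_iff, LinearMap.funLeft_apply, Pi.zero_apply,
      Subtype.forall, mem_sdiff, mem_vanishOn]
    rw [mem_vanishOn] at hc
    refine ⟨fun h0 => ⟨hc.1, fun i hi => ?_⟩, fun h1 i hi => h1.2 i hi.1⟩
    by_cases hiT : i ∈ T
    · exact hc.2 i hiT
    · exact h0 i ⟨hi, hiT⟩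
  have hrank := f.finrank_range_add_finrank_ker
  rw [hker, ((vanishOn C T').comapSubtypeEquivOfLe (vanishOn_anti h)).finrank_eq] at hrank
  have := Submodule.finrank_le (LinearMap.range f)
  rw [Module.finrank_fintype_fun_eq_card, Fintype.card_coe] at this
  omega

theorem finrank_vanishOn_add_card_le : Module.finrank F (vanishOn C T) + #T ≤ n := by
  have hbot : vanishOn C univ = ⊥ := (Submodule.eq_bot_iff _).2 fun c hc =>
    funext fun i => (mem_vanishOn.1 hc).2 i (mem_univ i)
  have := finrank_vanishOn_le (C := C) (subset_univ T)
  rw [hbot, finrank_bot, zero_add] at this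
  have := card_sdiff_add_card_eq_card (subset_univ T)
  rw [card_univ, Fintype.card_fin] at this
  omega

/-- The Singleton bound for the shortened code: shorten at `finrank - 1` further coordinates and
pick a nonzero codeword that survives. -/
theorem exists_wt_add_finrank_vanishOn_le (h : 0 < Module.finrank F (vanishOn C T)) :
    ∃ c ∈ C, c ≠ 0 ∧ wt c + Module.finrank F (vanishOn C T) + #T ≤ n + 1 := by
  set k := Module.finrank F (vanishOn C T)
  have hroom : #T + (k - 1) ≤ Fintype.card (Fin n) := by
    have := finrank_vanishOn_add_card_le (C := C) (T := T)
    rw [Fintype.card_fin]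
    omega
  obtain ⟨T', hTT', hcard⟩ := exists_superset_card_eq (Nat.le_add_right _ (k - 1)) hroom
  have hpos : 0 < Module.finrank F (vanishOn C T') := by
    have := finrank_vanishOn_le (C := C) hTT'
    rw [card_sdiff_of_subset hTT'] at this
    omega
  obtain ⟨c, hc, hc0⟩ := exists_mem_vanishOn_ne_zero hpos
  have := wt_add_card_le_of_eq_zero (mem_vanishOn.1 hc).2
  exact ⟨c, (mem_vanishOn.1 hc).1, hc0, by omega⟩

/-- A recovery set `S` of a codeword surviving the shortening at `T` contains at least `δ`
new coordinates, but shortening at all of `S` costs at most `|S \ T| - (δ - 1)` dimensions,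
since a codeword vanishing on all but `δ - 1` points of `S` vanishes on `S`. -/
theorem HasLocality.exists_vanishOn_step (hloc : HasLocality (C : Set (Fin n → F)) r δ)
    (h : 0 < Module.finrank F (vanishOn C T)) :
    ∃ T', T ⊆ T' ∧ #(T' \ T) ≤ r + δ - 1 ∧
      Module.finrank F (vanishOn C T) + (δ - 1) ≤ Module.finrank F (vanishOn C T') + #(T' \ T) := by
  classical
  obtain ⟨c, hc, hc0⟩ := exists_mem_vanishOn_ne_zero h
  obtain ⟨i, hi⟩ := Function.ne_iff.1 hc0
  obtain ⟨S, hiS, hScard, hSdist⟩ := hloc i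
  have hlarge : δ ≤ #(S \ T) := by
    refine (hSdist c (mem_vanishOn.1 hc).1 0 C.zero_mem ⟨i, hiS, hi⟩).trans (card_le_card ?_)
    intro x hx
    rw [mem_filter] at hx
    exact mem_sdiff.2 ⟨hx.1, fun hxT => hx.2 ((mem_vanishOn.1 hc).2 x hxT)⟩
  obtain ⟨D, hDS, hDcard⟩ := exists_subset_card_eq (show δ - 1 ≤ #(S \ T) by omega)
  have hT : T ⊆ (T ∪ S) \ D := fun x hx =>
    mem_sdiff.2 ⟨mem_union_left S hx, fun hxD => (mem_sdiff.1 (hDS hxD)).2 hx⟩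
  have hle : vanishOn C ((T ∪ S) \ D) ≤ vanishOn C (T ∪ S) := by
    intro g hg
    obtain ⟨hgC, hg0⟩ := mem_vanishOn.1 hg
    have hgS : ∀ x ∈ S, g x = 0 := by
      by_contra! ⟨x, hxS, hgx⟩
      have hsub : S.filter (fun y => g y ≠ (0 : Fin n → F) y) ⊆ D := fun y hy => by
        rw [mem_filter] at hy
        by_contra hyD
        exact hy.2 (hg0 y (mem_sdiff.2 ⟨mem_union_right T hy.1, hyD⟩))
      have hxD : x ∈ D := hsub (mem_filter.2 ⟨hxS, hgx⟩)
      have := (hSdist g hgC 0 C.zero_mem ⟨x, hxS, hgx⟩).trans (card_le_card hsub)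
      have := card_pos.2 ⟨x, hxD⟩
      omega
    refine mem_vanishOn.2 ⟨hgC, fun x hx => ?_⟩
    by_cases hxD : x ∈ D
    · exact hgS x (mem_sdiff.1 (hDS hxD)).1
    · exact hg0 x (mem_sdiff.2 ⟨hx, hxD⟩)
  refine ⟨T ∪ S, subset_union_left, ?_, ?_⟩
  · rw [union_sdiff_left]
    exact (card_le_card sdiff_subset).trans hScard
  · have hshort := finrank_vanishOn_le (C := C) hT
    have := Submodule.finrank_mono hle
    rw [sdiff_sdiff_comm, union_sdiff_left, card_sdiff_of_subset hDS, hDcard] at hshort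
    rw [union_sdiff_left]
    omega

theorem HasLocality.exists_vanishOn_iterate (hloc : HasLocality (C : Set (Fin n → F)) r δ)
    (j : ℕ) (hj : j * r < Module.finrank F C) :
    ∃ T : Finset (Fin n),
      Module.finrank F C + j * (δ - 1) ≤ Module.finrank F (vanishOn C T) + #T ∧
      Module.finrank F C ≤ Module.finrank F (vanishOn C T) + j * r := by
  induction j with
  | zero => exact ⟨∅, by rw [vanishOn_empty]; simp⟩
  | succ j ih =>
    simp only [Nat.succ_mul] at hj ⊢
    obtain ⟨T, hgain, hloss⟩ := ih (by omega)
    obtain ⟨T', hTT', hcard, hstep⟩ := hloc.exists_vanishOn_step (T := T) (by omega)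
    have := card_sdiff_of_subset hTT'
    have := card_le_card hTT'
    exact ⟨T', by omega, by omega⟩

/-- The Singleton-like bound `d ≤ n - k - (⌈k / r⌉ - 1)(δ - 1) + 1`, for any `s` with
`s * r < k`, i.e. `s ≤ ⌈k / r⌉ - 1`. -/
theorem HasLocality.exists_wt_le (hloc : HasLocality (C : Set (Fin n → F)) r δ) {s : ℕ}
    (hs : s * r < Module.finrank F C) :
    ∃ c ∈ C, c ≠ 0 ∧ wt c + Module.finrank F C + s * (δ - 1) ≤ n + 1 := by
  obtain ⟨T, hgain, hloss⟩ := hloc.exists_vanishOn_iterate s hs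
  obtain ⟨c, hc, hc0, hwt⟩ := exists_wt_add_finrank_vanishOn_le (C := C) (T := T) (by omega)
  exact ⟨c, hc, hc0, by omega⟩

theorem lt_of_ceilDiv'_eq_succ {k s : ℕ} (hr : 0 < r) (h : ceilDiv' k r = s + 1) : s * r < k := by
  have := (Nat.le_div_iff_mul_le hr).1 h.ge
  rw [add_one_mul] at this
  omega

end SingletonLike

section CyclicCode

variable {F : Type} [Field F] {n : ℕ}

theorem mem_cyclicCode {Z : Set F} {c : Fin n → F} :
    c ∈ cyclicCode F n Z ↔ ∀ β ∈ Z, ∑ i : Fin n, c i * β ^ (i : ℕ) = 0 := by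
  simp [cyclicCode, cyclicCodeOn]

theorem twist_mem_cyclicCode {Z Z' : Set F} {c : Fin n → F} (hc : c ∈ cyclicCode F n Z')
    {β : F} (hβ : ∀ z ∈ Z, β * z ∈ Z') :
    (fun i : Fin n => β ^ (i : ℕ) * c i) ∈ cyclicCode F n Z := by
  rw [mem_cyclicCode] at hc ⊢
  intro z hz
  rw [← hc (β * z) (hβ z hz)]
  exact sum_congr rfl fun i _ => by ring

theorem shift_mem_cyclicCode [NeZero n] {Z : Set F} (hZ : ∀ β ∈ Z, β ^ n = 1) {c : Fin n → F}
    (hc : c ∈ cyclicCode F n Z) (j : Fin n) : (fun i => c (i + j)) ∈ cyclicCode F n Z := by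
  rw [mem_cyclicCode] at hc ⊢
  intro β hβ
  have hpow (i : Fin n) : β ^ ((i - j : Fin n) : ℕ) = β ^ (n - j : ℕ) * β ^ (i : ℕ) := by
    rw [Fin.val_sub, ← pow_eq_pow_mod _ (hZ β hβ), pow_add]
  rw [← (Equiv.subRight j).sum_comp fun i => c (i + j) * β ^ (i : ℕ)]
  simp only [Equiv.subRight_apply, sub_add_cancel, hpow, mul_left_comm _ (β ^ (n - j : ℕ)),
    ← mul_sum, hc β hβ, mul_zero]

/-- Lagrange interpolation at the points of `Z` by polynomials of degree `< #Z ≤ n` shows that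
the `#Z` evaluation conditions are independent. -/
theorem finrank_cyclicCode (Z : Finset F) (hZ : #Z ≤ n) :
    Module.finrank F (cyclicCode F n Z) = n - #Z := by
  classical
  let ev : Matrix Z (Fin n) F := Matrix.of fun β i => (β : F) ^ (i : ℕ)
  have hker : LinearMap.ker ev.mulVecLin = cyclicCode F n Z := by
    ext c
    simp only [LinearMap.mem_ker, Matrix.mulVecLin_apply, funext_iff, Matrix.mulVec,
      dotProduct, Pi.zero_apply, mem_cyclicCode, Subtype.forall, SetLike.mem_coe, ev,
      Matrix.of_apply, mul_comm]
  have hsurj : Function.Surjective ev.mulVecLin := by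
    intro y
    let p := Lagrange.interpolate univ (Subtype.val : Z → F) y
    have hinj : Set.InjOn (Subtype.val : Z → F) (univ : Finset Z) := Subtype.val_injective.injOn
    refine ⟨fun i => p.coeff i, funext fun β => ?_⟩
    have heval : p.eval (β : F) = ∑ i : Fin n, p.coeff i * (β : F) ^ (i : ℕ) := by
      rcases eq_or_ne p 0 with hp | hp
      · simp [hp]
      · rw [Fin.sum_univ_eq_sum_range (fun i => p.coeff i * (β : F) ^ i),
          ← Polynomial.eval_eq_sum_range']
        have := Lagrange.degree_interpolate_lt (r := y) hinj
        rw [card_univ, Fintype.card_coe] at this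
        rw [Polynomial.natDegree_lt_iff_degree_lt hp]
        exact this.trans_le (by exact_mod_cast hZ)
    rw [← Lagrange.eval_interpolate_at_node y hinj (mem_univ β), heval]
    simp only [Matrix.mulVecLin_apply, Matrix.mulVec, dotProduct, ev, Matrix.of_apply, mul_comm]
  have hrank := ev.mulVecLin.finrank_range_add_finrank_ker
  rw [LinearMap.range_eq_top.2 hsurj, finrank_top, hker, Module.finrank_fintype_fun_eq_card,
    Module.finrank_fin_fun, Fintype.card_coe] at hrank
  omega

theorem finrank_cyclicCode_image_pow {β γ : F} (hβ : β ≠ 0) (hγ : IsPrimitiveRoot γ n)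
    {E : Finset ℕ} (hE : E ⊆ range n) :
    Module.finrank F (cyclicCode F n ((fun e => β * γ ^ e) '' (E : Set ℕ))) = n - #E := by
  classical
  have hinj : Set.InjOn (fun e => β * γ ^ e) E := fun e he e' he' hee' =>
    hγ.pow_inj (mem_range.1 (hE he)) (mem_range.1 (hE he')) (mul_left_cancel₀ hβ hee')
  have := card_le_card hE
  rw [card_range] at this
  rw [← coe_image, finrank_cyclicCode _ (card_image_le.trans this), card_image_of_injOn hinj]

/-- The Vandermonde core of the BCH bound: the `d` equations `∑ᵢ cᵢ (γ^w)^i = 0` restricted to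
the support of `c` form an injective Vandermonde system as soon as the support has `≤ d` points. -/
theorem lt_wt_of_forall_sum_mul_pow_eq_zero {γ : F} (hγ : IsPrimitiveRoot γ n) {d : ℕ}
    {c : Fin n → F} (hc0 : c ≠ 0) (h : ∀ w < d, ∑ i : Fin n, c i * (γ ^ w) ^ (i : ℕ) = 0) :
    d < wt c := by
  classical
  by_contra! hle
  rw [wt_eq_card_filter] at hle
  set S := univ.filter fun i => c i ≠ 0
  let σ := S.equivFin.symm
  have hv : (fun k => c (σ k)) = 0 := by
    refine Matrix.eq_zero_of_forall_pow_sum_mul_pow_eq_zero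
      (f := fun k => γ ^ ((σ k : Fin n) : ℕ)) (fun k k' hkk' => ?_) fun w => ?_
    · exact σ.injective (Subtype.ext (Fin.ext (hγ.pow_inj (σ k : Fin n).2 (σ k' : Fin n).2 hkk')))
    · calc ∑ k, c (σ k) * (γ ^ ((σ k : Fin n) : ℕ)) ^ (w : ℕ)
          = ∑ i ∈ S, c i * (γ ^ (w : ℕ)) ^ (i : ℕ) := by
            rw [← S.sum_coe_sort, ← σ.sum_comp]
            simp only [← pow_mul, mul_comm]
        _ = ∑ i, c i * (γ ^ (w : ℕ)) ^ (i : ℕ) :=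
            sum_subset (subset_univ S) fun i _ hi => by simp_all [S]
        _ = 0 := h w (by omega)
  obtain ⟨i, hi⟩ := Function.ne_iff.1 hc0
  exact hi (by simpa [σ] using congrFun hv (S.equivFin ⟨i, mem_filter.2 ⟨mem_univ i, hi⟩⟩))

theorem bch_bound {β γ : F} (hβ : β ≠ 0) (hγ : IsPrimitiveRoot γ n) {d : ℕ} {Z : Set F}
    (hZ : ∀ w < d, β * γ ^ w ∈ Z) {c : Fin n → F} (hc : c ∈ cyclicCode F n Z) (hc0 : c ≠ 0) :
    d < wt c := by
  have htwist := twist_mem_cyclicCode hc (Z := {z | β * z ∈ Z}) (fun z hz => hz)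
  have hwt : wt (fun i : Fin n => β ^ (i : ℕ) * c i) = wt c := by
    classical
    simp only [wt_eq_card_filter, mul_ne_zero_iff, ne_eq, pow_eq_zero_iff', hβ, false_and,
      not_false_eq_true, true_and]
  rw [← hwt]
  refine lt_wt_of_forall_sum_mul_pow_eq_zero hγ ?_ fun w hw => mem_cyclicCode.1 htwist _ (hZ w hw)
  obtain ⟨i, hi⟩ := Function.ne_iff.1 hc0
  exact Function.ne_iff.2 ⟨i, mul_ne_zero (pow_ne_zero _ hβ) hi⟩

/-- The support of `u` is a recovery set for `i`: apply the BCH bound to `u * (c - c')`. -/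
theorem hasLocality_of_checks {γ : F} (hγ : IsPrimitiveRoot γ n) {C : Submodule F (Fin n → F)}
    {r δ : ℕ} {Z : Set F} (hZ : ∀ w < δ - 1, γ ^ w ∈ Z)
    (h : ∀ i, ∃ u : Fin n → F, u i ≠ 0 ∧ wt u ≤ r + δ - 1 ∧ ∀ c ∈ C, u * c ∈ cyclicCode F n Z) :
    HasLocality (C : Set (Fin n → F)) r δ := by
  classical
  intro i
  obtain ⟨u, hui, hwt, hcheck⟩ := h i
  refine ⟨univ.filter (u · ≠ 0), mem_filter.2 ⟨mem_univ i, hui⟩, ?_, ?_⟩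
  · rwa [← wt_eq_card_filter]
  rintro c hc c' hc' ⟨x, hxS, hx⟩
  have hbch := bch_bound one_ne_zero hγ (by simpa using hZ) (hcheck _ (C.sub_mem hc hc'))
    (Function.ne_iff.2 ⟨x, mul_ne_zero (mem_filter.1 hxS).2 (sub_ne_zero.2 hx)⟩)
  rw [wt_eq_card_filter] at hbch
  rw [filter_filter]
  simp only [Pi.mul_apply, Pi.sub_apply, mul_ne_zero_iff, sub_ne_zero] at hbch
  omega

/-- For `γ ∈ B`, the sum `∑ₓ v(x - j) cₓ γ^x` is the inner product of `v` with the shift by `j`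
of the twist `x ↦ γ^x cₓ`, which lies in `C_A`. -/
theorem shift_mul_mem_cyclicCode_of_mem_dualSet [NeZero n] {A B : Set F}
    (hA : ∀ β ∈ A, β ^ n = 1) {v : Fin n → F} (hv : v ∈ dualSet F n (cyclicCode F n A))
    {c : Fin n → F} (hc : c ∈ cyclicCode F n (A * B)) (j : Fin n) :
    (fun x => v (x - j)) * c ∈ cyclicCode F n B := by
  rw [mem_cyclicCode]
  intro γ hγ
  have hw := shift_mem_cyclicCode hA
    (twist_mem_cyclicCode hc (β := γ) fun a ha => mul_comm γ a ▸ Set.mul_mem_mul ha hγ) j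
  rw [← hv _ hw, ← Equiv.sum_comp (Equiv.addRight j)]
  refine sum_congr rfl fun i _ => ?_
  simp only [Equiv.coe_addRight, Pi.mul_apply, add_sub_cancel_right]
  ring

/-- The cyclic shifts of `v` serve as the check vectors. -/
theorem hasLocality_cyclicCode_mul [NeZero n] {A B : Set F} (hA : ∀ β ∈ A, β ^ n = 1)
    {γ : F} (hγ : IsPrimitiveRoot γ n) {δ : ℕ} (hB : ∀ w < δ - 1, γ ^ w ∈ B) {v : Fin n → F}
    (hv : v ∈ dualSet F n (cyclicCode F n A)) (hv0 : v ≠ 0) :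
    HasLocality (cyclicCode F n (A * B) : Set (Fin n → F)) (wt v - δ + 1) δ := by
  obtain ⟨p, hp⟩ := Function.ne_iff.1 hv0
  refine hasLocality_of_checks hγ hB fun i => ⟨fun x => v (x - (i - p)), ?_, ?_, ?_⟩
  · simpa using hp
  · rw [wt_comp_sub]
    omega
  · exact fun c hc => shift_mul_mem_cyclicCode_of_mem_dualSet hA hv hc (i - p)

end CyclicCode

section Runs

/-- The exponents `e` of the complete defining set `AB = {α^(t + e b)}`: one run of length
`m + δ - 2` from `0` and one of length `δ - 1` from each `idx l`. -/
def runExponents (m δ : ℕ) {s : ℕ} (idx : Fin s → ℕ) : Finset ℕ :=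
  range (m + δ - 2) ∪ univ.biUnion fun l => Ico (idx l) (idx l + (δ - 1))

variable {m δ s : ℕ} {idx : Fin s → ℕ}

theorem mem_runExponents {e : ℕ} :
    e ∈ runExponents m δ idx ↔ e < m + δ - 2 ∨ ∃ l, idx l ≤ e ∧ e < idx l + (δ - 1) := by
  simp [runExponents]

theorem add_le_of_gap (hgap : ∀ l : Fin s, ∀ hl : (l : ℕ) + 1 < s, idx l + δ ≤ idx ⟨l + 1, hl⟩)
    {l l' : Fin s} (h : l < l') : idx l + δ ≤ idx l' := by
  obtain ⟨l, hl⟩ := l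
  obtain ⟨l', hl'⟩ := l'
  change l + 1 ≤ l' at h
  induction l', h using Nat.le_induction with
  | base => exact hgap ⟨l, hl⟩ hl'
  | succ k hk ih =>
    exact (ih (by omega)).trans ((Nat.le_add_right _ δ).trans (hgap ⟨k, by omega⟩ hl'))

theorem card_runExponents (hm : 0 < m) (hδ : 0 < δ) (hlow : ∀ l, m - 1 + δ ≤ idx l)
    (hgap : ∀ l : Fin s, ∀ hl : (l : ℕ) + 1 < s, idx l + δ ≤ idx ⟨l + 1, hl⟩) :
    #(runExponents m δ idx) = m - 1 + (s + 1) * (δ - 1) := by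
  have hdisj :
      Disjoint (range (m + δ - 2)) (univ.biUnion fun l => Ico (idx l) (idx l + (δ - 1))) := by
    simp only [disjoint_left, mem_range, mem_biUnion, mem_univ, true_and, mem_Ico, not_exists]
    intro e he l hle
    have := hlow l
    omega
  have hpair : Set.PairwiseDisjoint (univ : Finset (Fin s))
      fun l => Ico (idx l) (idx l + (δ - 1)) := by
    intro l _ l' _ hll'
    simp only [Function.onFun, disjoint_left, mem_Ico]
    intro e he he'
    rcases lt_or_gt_of_ne hll' with h | h <;> have := add_le_of_gap hgap h <;> omega
  rw [runExponents, card_union_of_disjoint hdisj, card_biUnion hpair, card_range]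
  simp only [Nat.card_Ico, add_tsub_cancel_left, sum_const, card_univ, Fintype.card_fin,
    smul_eq_mul]
  rw [add_one_mul]
  omega

theorem runExponents_subset_range {n : ℕ} (hs : 0 < s) (hlow : ∀ l, m - 1 + δ ≤ idx l)
    (hupp : ∀ l, idx l ≤ n - δ) : runExponents m δ idx ⊆ range n := by
  intro e he
  have := hlow ⟨0, hs⟩
  have := hupp ⟨0, hs⟩
  rcases mem_runExponents.1 he with he | ⟨l, hle, hlt⟩
  · exact mem_range.2 (by omega)
  · have := hlow l
    have := hupp l
    exact mem_range.2 (by omega)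

theorem runs_mul_eq_image {M : Type*} [Monoid M] (β γ : M) (hm : 0 < m) (hδ : 2 ≤ δ) :
    ({x | ∃ j < m, x = β * γ ^ j} ∪ {x | ∃ l : Fin s, x = β * γ ^ idx l}) *
        {x | ∃ j < δ - 1, x = γ ^ j} =
      (fun e => β * γ ^ e) '' (runExponents m δ idx : Set ℕ) := by
  ext x
  simp only [Set.mem_mul, Set.mem_union, Set.mem_ofPred, Set.mem_image, mem_coe,
    mem_runExponents]
  constructor
  · rintro ⟨a, ⟨j, hj, rfl⟩ | ⟨l, rfl⟩, _, ⟨u, hu, rfl⟩, rfl⟩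
    · exact ⟨j + u, Or.inl (by omega), by rw [pow_add, mul_assoc]⟩
    · exact ⟨idx l + u, Or.inr ⟨l, by omega, by omega⟩, by rw [pow_add, mul_assoc]⟩
  · rintro ⟨e, he | ⟨l, hle, hlt⟩, rfl⟩
    · obtain ⟨j, u, hj, hu, rfl⟩ : ∃ j u, j < m ∧ u < δ - 1 ∧ e = j + u :=
        ⟨min e (m - 1), e - min e (m - 1), by omega, by omega, by omega⟩
      exact ⟨β * γ ^ j, Or.inl ⟨j, hj, rfl⟩, γ ^ u, ⟨u, hu, rfl⟩, by rw [pow_add, mul_assoc]⟩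
    · refine ⟨β * γ ^ idx l, Or.inr ⟨l, rfl⟩, γ ^ (e - idx l), ⟨e - idx l, by omega, rfl⟩, ?_⟩
      rw [mul_assoc, ← pow_add, Nat.add_sub_cancel' hle]

end Runs

theorem stmt7_general (F : Type) [Field F] (n m s b t δ : ℕ)
    (hm : 0 < m) (hs : 0 < s) (hδ : 2 ≤ δ)
    (hb : Nat.Coprime b n)
    (α : F) (hα : IsPrimitiveRoot α n)
    (idx : Fin s → ℕ)
    (hlow : ∀ l : Fin s, m - 1 + δ ≤ idx l) (hupp : ∀ l : Fin s, idx l ≤ n - δ)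
    (hgap : ∀ l : Fin s, ∀ hl : (l : ℕ) + 1 < s, idx l + δ ≤ idx ⟨(l : ℕ) + 1, hl⟩)
    (A B : Set F)
    (hAdef : A = {x : F | ∃ j < m, x = α ^ (t + j * b)} ∪
      {x : F | ∃ l : Fin s, x = α ^ (t + idx l * b)})
    (hBdef : B = {x : F | ∃ j < δ - 1, x = α ^ (j * b)})
    (dA : ℕ)
    (hdA : IsMinDist (dualSet F n (cyclicCode F n A : Set (Fin n → F))) dA) :
    HasLocality (cyclicCode F n (A * B) : Set (Fin n → F)) (dA - δ + 1) δ ∧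
    Module.finrank F (cyclicCode F n (A * B)) = n - m + 1 - (s + 1) * (δ - 1) ∧
    (ceilDiv' (n - m + 1 - (s + 1) * (δ - 1)) (dA - δ + 1) = s + 1 →
      IsMinDist (cyclicCode F n (A * B) : Set (Fin n → F)) (m + δ - 1) ∧
      SingletonOpt n (n - m + 1 - (s + 1) * (δ - 1)) (dA - δ + 1) δ (m + δ - 1)) := by
  have hmn : m + δ ≤ n := by
    have := hlow ⟨0, hs⟩
    have := hupp ⟨0, hs⟩
    omega
  have : NeZero n := ⟨by omega⟩
  have hβ : α ^ t ≠ 0 := pow_ne_zero t (hα.ne_zero (NeZero.ne n))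
  have hγ : IsPrimitiveRoot (α ^ b) n := hα.pow_of_coprime b hb
  have hE := runExponents_subset_range hs hlow hupp (n := n)
  have hEn : #(runExponents m δ idx) ≤ n := by simpa using card_le_card hE
  have hcard := card_runExponents hm (by omega) hlow hgap
  have hAB : A * B = (fun e => α ^ t * (α ^ b) ^ e) '' (runExponents m δ idx : Set ℕ) := by
    simp only [hAdef, hBdef, pow_add, pow_mul']
    exact runs_mul_eq_image _ _ hm hδ
  have hdim : Module.finrank F (cyclicCode F n (A * B)) = n - m + 1 - (s + 1) * (δ - 1) := by
    rw [hAB, finrank_cyclicCode_image_pow hβ hγ hE]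
    omega
  have hA : ∀ β ∈ A, β ^ n = 1 := by
    rw [hAdef]
    rintro β (⟨j, -, rfl⟩ | ⟨l, rfl⟩) <;> rw [pow_right_comm, hα.pow_eq_one, one_pow]
  have hB : ∀ w < δ - 1, (α ^ b) ^ w ∈ B := fun w hw => hBdef ▸ ⟨w, hw, (pow_mul' α w b).symm⟩
  have hbch : ∀ c ∈ cyclicCode F n (A * B), c ≠ 0 → m + δ - 1 ≤ wt c := fun c hc hc0 => by
    have := bch_bound hβ hγ (fun w hw => hAB ▸ ⟨w, mem_runExponents.2 (Or.inl hw), rfl⟩) hc hc0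
    omega
  obtain ⟨⟨v, hv, hv0, rfl⟩, -⟩ := hdA
  have hloc := hasLocality_cyclicCode_mul hA hγ hB hv hv0
  refine ⟨hloc, hdim, fun hceil => ?_⟩
  obtain ⟨c, hc, hc0, hwt⟩ :=
    hloc.exists_wt_le (lt_of_ceilDiv'_eq_succ (by omega) (hdim ▸ hceil))
  have := hbch c hc hc0
  rw [SingletonOpt, hceil, Nat.add_sub_cancel]
  rw [add_one_mul] at hcard hdim ⊢
  exact ⟨⟨⟨c, hc, hc0, by omega⟩, hbch⟩, by omega⟩

/-- the generic construction of optimal cyclic `(r,δ)`-LRCs of length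
`n ∣ q - 1` from the BCH bound (Theorem 4.1 of the paper). -/
theorem stmt7 (F : Type) [Field F] [Fintype F] (n m s b t δ : ℕ)
    (hn : 0 < n) (hm : 0 < m) (hs : 0 < s) (hδ : 2 ≤ δ)
    (hdvd : n ∣ Fintype.card F - 1) (hb : Nat.Coprime b n)
    (ht : t ≤ n - 1)
    (α : F) (hα : IsPrimitiveRoot α n)
    (idx : Fin s → ℕ)
    (hlow : ∀ l : Fin s, m - 1 + δ ≤ idx l) (hupp : ∀ l : Fin s, idx l ≤ n - δ)
    (hgap : ∀ l : Fin s, ∀ hl : (l : ℕ) + 1 < s, idx l + δ ≤ idx ⟨(l : ℕ) + 1, hl⟩)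
    (A B : Set F)
    (hAdef : A = {x : F | ∃ j < m, x = α ^ (t + j * b)} ∪
      {x : F | ∃ l : Fin s, x = α ^ (t + idx l * b)})
    (hBdef : B = {x : F | ∃ j < δ - 1, x = α ^ (j * b)})
    (dA : ℕ)
    (hdA : IsMinDist (dualSet F n (cyclicCode F n A : Set (Fin n → F))) dA) :
    HasLocality (cyclicCode F n (A * B) : Set (Fin n → F)) (dA - δ + 1) δ ∧
    Module.finrank F (cyclicCode F n (A * B)) = n - m + 1 - (s + 1) * (δ - 1) ∧
    (ceilDiv' (n - m + 1 - (s + 1) * (δ - 1)) (dA - δ + 1) = s + 1 →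
      IsMinDist (cyclicCode F n (A * B) : Set (Fin n → F)) (m + δ - 1) ∧
      SingletonOpt n (n - m + 1 - (s + 1) * (δ - 1)) (dA - δ + 1) δ (m + δ - 1)) :=
  stmt7_general F n m s b t δ hm hs hδ hb α hα idx hlow hupp hgap A B hAdef hBdef dA hdA
end
end

section
/- Let n | q - 1, b coprime to n, α a primitive n-th root of unity in F_q, and A = {α^t, α^{t+b}, ..., α^{t+(m-1)b}, α^{t+ℓb}} with m + 1 ≤ ℓ ≤ n - 2. Then the cyclic code C_A of length n over F_q with complete defining set A is an optimal cyclic r-LRC with r = d_A⊥ - 1, where d_A⊥ is the minimum distance of the dual of C_A; that is, its minimum distance d satisfies d = n - k - ⌈k/r⌉ + 2 where k = n - m - 1. -/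
noncomputable section

open Polynomial
open scoped Pointwise

/-!
The defining set contains the `m` consecutive powers `α ^ t * γ ^ j` (`j < m`) of the primitive
root `γ = α ^ b`, so the BCH bound gives `d ≥ m + 1`, and `m + 1` parity checks give `d ≤ m + 2`.

The dual code is the row space of the check matrix `(β ^ i)`, `β ∈ A`. A row combination is
`i ↦ α ^ (t i) g(γ ^ i)` with `g = ∑_{j < m} y_j X ^ j + y_m X ^ ℓ`. On the `n`-th roots of unity
`X ^ (n - ℓ) g` agrees with a polynomial of degree `≤ n - ℓ + m - 1`, so `g` has at most
`min ℓ (n - ℓ + m - 1)` zeros there, and `2 d⊥ ≥ n - m + 1`.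

A vector orthogonal to a word `c` that vanishes on all but one point of the support of `c`
vanishes on the whole support. Applied to a minimum-weight codeword and a nonzero dual word
vanishing on all but one point of its support, this gives `d⊥ ≤ n - m - 1` when `d = m + 1`.
Applied to a dual word with `m + 1` zeros and to codewords supported on those zeros plus one
more point, it gives `d⊥ ≥ n - m` when `d = m + 2`. Either way `⌈k / r⌉ = m + 3 - d`. Cyclic
shifts of a minimum-weight dual word give every coordinate a repair group of size `d⊥`.
-/

open Finset Matrix

section Weight

variable {F : Type} [Zero F] {n : ℕ}

open Classical in
theorem wt_add_card_filter_eq_zero (v : Fin n → F) : wt v + #{i | v i = 0} = n := by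
  rw [wt, add_comm, card_filter_add_card_filter_not, card_univ, Fintype.card_fin]

theorem wt_le_sub_card_of_eq_zero {v : Fin n → F} {Z : Finset (Fin n)}
    (hZ : ∀ i ∈ Z, v i = 0) : wt v ≤ n - #Z := by
  classical
  have := wt_add_card_filter_eq_zero v
  have : #Z ≤ #{i | v i = 0} := card_le_card fun i hi ↦ by simpa using hZ i hi
  omega

open Classical in
theorem wt_le_card_of_eq_zero_of_notMem {c : Fin n → F} {T : Finset (Fin n)}
    (hT : ∀ i ∉ T, c i = 0) : wt c ≤ #T :=
  card_le_card fun i hi ↦ by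
    by_contra h
    exact (mem_filter.1 hi).2 (hT i h)

open Classical in
theorem wt_pos {c : Fin n → F} (hc : c ≠ 0) : 0 < wt c := by
  obtain ⟨i, hi⟩ := Function.ne_iff.1 hc
  exact card_pos.2 ⟨i, mem_filter.2 ⟨mem_univ _, hi⟩⟩

open Classical in
theorem wt_comp_equiv (c : Fin n → F) (σ : Fin n ≃ Fin n) : wt (c ∘ σ) = wt c := by
  rw [wt, wt]
  exact card_bij' (fun i _ ↦ σ i) (fun i _ ↦ σ.symm i) (by simp) (by simp) (by simp) (by simp)

theorem exists_isMinDist {C : Set (Fin n → F)} (hC : ∃ c ∈ C, c ≠ 0) : ∃ d, IsMinDist C d := by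
  classical
  have hex : ∃ d, ∃ c ∈ C, c ≠ 0 ∧ wt c = d := by
    obtain ⟨c, hc, hc0⟩ := hC
    exact ⟨_, c, hc, hc0, rfl⟩
  exact ⟨Nat.find hex, Nat.find_spec hex, fun c hc hc0 ↦ Nat.find_min' hex ⟨c, hc, hc0, rfl⟩⟩

end Weight

section LinearAlgebra

variable {F : Type} [Field F] {ι κ : Type} [Fintype ι]

theorem Matrix.exists_mulVec_eq_zero_of_card_lt [Fintype κ] (M : Matrix ι κ F)
    (h : Fintype.card ι < Fintype.card κ) : ∃ x ≠ 0, M *ᵥ x = 0 := by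
  obtain ⟨x, hx, hx0⟩ := Submodule.exists_mem_ne_zero_of_ne_bot
    (LinearMap.ker_ne_bot_of_finrank_lt (f := M.mulVecLin) (by simpa using h))
  exact ⟨x, hx0, hx⟩

theorem Matrix.exists_mulVec_eq_zero_supported_of_card_lt [Fintype κ] (M : Matrix ι κ F)
    (T : Finset κ) (h : Fintype.card ι < #T) :
    ∃ x ≠ 0, M *ᵥ x = 0 ∧ ∀ k ∉ T, x k = 0 := by
  obtain ⟨x, hx0, hx⟩ := (M.submatrix id ((↑) : T → κ)).exists_mulVec_eq_zero_of_card_lt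
    (by simpa using h)
  have hT : ∀ k ∉ T, Function.extend ((↑) : T → κ) x 0 k = 0 := fun k hk ↦
    Function.extend_apply' _ _ _ fun ⟨a, ha⟩ ↦ hk (ha ▸ a.2)
  refine ⟨Function.extend (↑) x 0, fun h0 ↦ hx0 ?_, ?_, hT⟩
  · ext a
    simpa [Subtype.val_injective.extend_apply] using congrFun h0 a
  · ext j
    rw [mulVec, dotProduct, ← sum_subset (subset_univ T) fun k _ hk ↦ by simp [hT k hk],
      ← sum_coe_sort T]
    simpa [Subtype.val_injective.extend_apply, mulVec, dotProduct] using congrFun hx j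

theorem Matrix.exists_vecMul_eq_zero_on_of_card_lt (M : Matrix ι κ F) (Z : Finset κ)
    (h : #Z < Fintype.card ι) : ∃ y ≠ 0, ∀ k ∈ Z, (y ᵥ* M) k = 0 := by
  obtain ⟨y, hy0, hy⟩ := (M.submatrix id ((↑) : Z → κ))ᵀ.exists_mulVec_eq_zero_of_card_lt
    (by simpa using h)
  exact ⟨y, hy0, fun k hk ↦ by
    simpa [mulVec, vecMul, dotProduct, mul_comm] using congrFun hy ⟨k, hk⟩⟩

theorem Matrix.exists_vecMul_eq_of_dotProduct_eq_zero [Fintype κ] (M : Matrix ι κ F)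
    {v : κ → F} (hv : ∀ c, M *ᵥ c = 0 → v ⬝ᵥ c = 0) : ∃ y, y ᵥ* M = v := by
  classical
  have hmem : dotProductEquiv F κ v ∈ (LinearMap.ker M.mulVecLin).dualAnnihilator :=
    (Submodule.mem_dualAnnihilator _).2 fun c hc ↦ hv c hc
  rw [← LinearMap.range_dualMap_eq_dualAnnihilator_ker] at hmem
  obtain ⟨g, hg⟩ := hmem
  refine ⟨(dotProductEquiv F ι).symm g, funext fun k ↦ ?_⟩
  calc ((dotProductEquiv F ι).symm g ᵥ* M) k
      = (dotProductEquiv F ι).symm g ⬝ᵥ (M *ᵥ Pi.single k 1) := by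
        rw [dotProduct_mulVec, dotProduct_single_one]
    _ = g (M *ᵥ Pi.single k 1) := by
        rw [← dotProductEquiv_apply_apply, LinearEquiv.apply_symm_apply]
    _ = v ⬝ᵥ Pi.single k 1 := LinearMap.congr_fun hg _
    _ = v k := dotProduct_single_one v k

end LinearAlgebra

theorem apply_eq_zero_of_dotProduct_eq_zero {F κ : Type} [Field F] [Fintype κ] {v c : κ → F}
    {i : κ} (h : v ⬝ᵥ c = 0) (hci : c i ≠ 0) (hvc : ∀ j ≠ i, v j = 0 ∨ c j = 0) : v i = 0 := by
  rw [dotProduct, Fintype.sum_eq_single i fun j hj ↦ by rcases hvc j hj with h | h <;> simp [h]]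
    at h
  exact (mul_eq_zero.1 h).resolve_right hci

section ParityCheck

variable {F : Type} [Field F] {ι : Type} [Fintype ι] {n : ℕ}

theorem mem_dualSet_ker_mulVecLin_iff (H : Matrix ι (Fin n) F) {v : Fin n → F} :
    v ∈ dualSet F n (LinearMap.ker H.mulVecLin : Set (Fin n → F)) ↔ ∃ y, y ᵥ* H = v := by
  refine ⟨fun hv ↦ H.exists_vecMul_eq_of_dotProduct_eq_zero fun c hc ↦ hv c hc, ?_⟩
  rintro ⟨y, rfl⟩ c hc
  change (y ᵥ* H) ⬝ᵥ c = 0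
  rw [← dotProduct_mulVec, show H *ᵥ c = 0 from hc, dotProduct_zero]

theorem exists_mem_ker_mulVecLin_wt_le (H : Matrix ι (Fin n) F) (h : Fintype.card ι < n) :
    ∃ c ∈ LinearMap.ker H.mulVecLin, c ≠ 0 ∧ wt c ≤ Fintype.card ι + 1 := by
  obtain ⟨T, -, hT⟩ := exists_subset_card_eq (s := (univ : Finset (Fin n)))
    (n := Fintype.card ι + 1) (by simpa using h)
  obtain ⟨c, hc0, hc, hcT⟩ := H.exists_mulVec_eq_zero_supported_of_card_lt T (by omega)
  exact ⟨c, hc, hc0, hT ▸ wt_le_card_of_eq_zero_of_notMem hcT⟩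

theorem le_wt_of_mem_dualSet_ker_mulVecLin (H : Matrix ι (Fin n) F)
    (hd : ∀ c ∈ LinearMap.ker H.mulVecLin, c ≠ 0 → Fintype.card ι + 1 ≤ wt c) {v : Fin n → F}
    (hv : v ∈ dualSet F n (LinearMap.ker H.mulVecLin : Set (Fin n → F))) (hv0 : v ≠ 0) :
    n + 1 ≤ wt v + Fintype.card ι := by
  classical
  by_contra! hlt
  obtain ⟨Z, hZv, hZ⟩ := exists_subset_card_eq (s := {i | v i = 0})
    (n := Fintype.card ι) (by have := wt_add_card_filter_eq_zero v; omega)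
  refine hv0 (funext fun i ↦ ?_)
  by_cases hi : i ∈ Z
  · simpa using hZv hi
  obtain ⟨c, hc0, hc, hcT⟩ := H.exists_mulVec_eq_zero_supported_of_card_lt (insert i Z)
    (by rw [card_insert_of_notMem hi]; omega)
  have hci : c i ≠ 0 := fun hci ↦ by
    have := wt_le_card_of_eq_zero_of_notMem (T := Z) fun j hj ↦ by
      by_cases hji : j = i
      · exact hji ▸ hci
      · exact hcT j (by simp [hji, hj])
    have := hd c hc hc0
    omega
  refine apply_eq_zero_of_dotProduct_eq_zero (hv c hc) hci fun j hj ↦ ?_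
  by_cases hjZ : j ∈ Z
  · exact .inl (by simpa using hZv hjZ)
  · exact .inr (hcT j (by simp [hj, hjZ]))

theorem exists_mem_dualSet_ker_mulVecLin_wt_add_le (H : Matrix ι (Fin n) F)
    (hH : ∀ y, y ᵥ* H = 0 → y = 0) {c : Fin n → F} (hc : c ∈ LinearMap.ker H.mulVecLin)
    (hc0 : c ≠ 0) (hwt : wt c ≤ Fintype.card ι) :
    ∃ v ∈ dualSet F n (LinearMap.ker H.mulVecLin : Set (Fin n → F)), v ≠ 0 ∧ wt v + wt c ≤ n := by
  classical
  obtain ⟨i, hi⟩ := Function.ne_iff.1 hc0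
  set I : Finset (Fin n) := {j | c j ≠ 0}
  have hI : #I = wt c := by rw [wt]
  have hiI : i ∈ I := by simpa [I] using hi
  obtain ⟨y, hy0, hy⟩ := H.exists_vecMul_eq_zero_on_of_card_lt (I.erase i)
    (by have := card_pos.2 ⟨i, hiI⟩; rw [card_erase_of_mem hiI]; omega)
  have hvi : (y ᵥ* H) i = 0 := by
    refine apply_eq_zero_of_dotProduct_eq_zero ?_ hi fun j hj ↦ ?_
    · exact (mem_dualSet_ker_mulVecLin_iff H).2 ⟨y, rfl⟩ c hc
    · by_cases hjI : j ∈ I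
      · exact .inl (hy j (mem_erase.2 ⟨hj, hjI⟩))
      · exact .inr (by simpa [I] using hjI)
  refine ⟨y ᵥ* H, (mem_dualSet_ker_mulVecLin_iff H).2 ⟨y, rfl⟩, fun h ↦ hy0 (hH y h), ?_⟩
  have := wt_le_sub_card_of_eq_zero (Z := I) fun j hj ↦ by
    by_cases hji : j = i
    · exact hji ▸ hvi
    · exact hy j (mem_erase.2 ⟨hji, hj⟩)
  have := card_le_univ I
  rw [Fintype.card_fin] at this
  omega

end ParityCheck

theorem hasLocality_two_of_forall_exists_mem_dualSet {F : Type} [Field F] {n : ℕ}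
    (C : Submodule F (Fin n → F)) {r : ℕ}
    (h : ∀ i, ∃ v ∈ dualSet F n (C : Set (Fin n → F)), v i ≠ 0 ∧ wt v ≤ r + 1) :
    HasLocality (C : Set (Fin n → F)) r 2 := by
  classical
  intro i
  obtain ⟨v, hv, hvi, hwt⟩ := h i
  refine ⟨({j | v j ≠ 0} : Finset (Fin n)), by simpa using hvi, ?_,
    fun c hc c' hc' ⟨j, hjS, hj⟩ ↦ ?_⟩
  · rw [wt] at hwt
    omega
  by_contra! hlt
  have hsingle := card_le_one.1 (Nat.lt_succ_iff.1 hlt)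
  refine (mem_filter.1 hjS).2 (apply_eq_zero_of_dotProduct_eq_zero (c := c - c')
    (hv _ (C.sub_mem hc hc')) (sub_ne_zero.2 hj) fun k hk ↦ ?_)
  by_cases hvk : v k = 0
  · exact .inl hvk
  · refine .inr (sub_eq_zero.2 (by_contra fun hck ↦ hk ?_))
    exact hsingle k (mem_filter.2 ⟨by simpa using hvk, hck⟩) j (mem_filter.2 ⟨hjS, hj⟩)

section CheckMatrix

variable {F : Type} [Field F] {ι : Type} {n : ℕ}

def checkMatrix (n : ℕ) (β : ι → F) : Matrix ι (Fin n) F :=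
  Matrix.of fun j i ↦ β j ^ (i : ℕ)

theorem cyclicCode_range_eq_ker (β : ι → F) :
    cyclicCode F n (Set.range β) = LinearMap.ker (checkMatrix n β).mulVecLin := by
  ext c
  simp only [cyclicCode, cyclicCodeOn, Submodule.mem_mk, AddSubmonoid.mem_mk,
    AddSubsemigroup.mem_mk, Set.mem_ofPred_eq, Set.forall_mem_range, LinearMap.mem_ker,
    Matrix.mulVecLin_apply, funext_iff, mulVec, dotProduct, checkMatrix, of_apply,
    Algebra.algebraMap_self, RingHom.id_apply, Pi.zero_apply, mul_comm]

theorem vecMul_checkMatrix_add [Fintype ι] [NeZero n] {β : ι → F} (hβ : ∀ j, β j ^ n = 1)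
    (y : ι → F) (i a : Fin n) :
    (y ᵥ* checkMatrix n β) (i + a) = ((fun j ↦ y j * β j ^ (a : ℕ)) ᵥ* checkMatrix n β) i := by
  simp only [vecMul, dotProduct, checkMatrix, of_apply, Fin.val_add, ← pow_eq_pow_mod _ (hβ _),
    pow_add, mul_assoc, mul_comm (β _ ^ (a : ℕ))]

theorem hasLocality_ker_checkMatrix [Fintype ι] {β : ι → F} (hβ : ∀ j, β j ^ n = 1) {dA : ℕ}
    (hdA : IsMinDist (dualSet F n (LinearMap.ker (checkMatrix n β).mulVecLin : Set (Fin n → F)))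
      dA) :
    HasLocality (LinearMap.ker (checkMatrix n β).mulVecLin : Set (Fin n → F)) (dA - 1) 2 := by
  refine hasLocality_two_of_forall_exists_mem_dualSet _ fun i ↦ ?_
  have : NeZero n := ⟨i.pos.ne'⟩
  obtain ⟨v, hv, hv0, rfl⟩ := hdA.1
  obtain ⟨y, rfl⟩ := (mem_dualSet_ker_mulVecLin_iff _).1 hv
  obtain ⟨k, hk⟩ := Function.ne_iff.1 hv0
  have hshift : (fun j ↦ y j * β j ^ ((k - i : Fin n) : ℕ)) ᵥ* checkMatrix n β =
      (y ᵥ* checkMatrix n β) ∘ Equiv.addRight (k - i) :=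
    funext fun j ↦ (vecMul_checkMatrix_add hβ y j _).symm
  refine ⟨_, (mem_dualSet_ker_mulVecLin_iff _).2 ⟨_, hshift⟩, by simpa using hk, ?_⟩
  have := wt_pos hv0
  rw [wt_comp_equiv]
  omega

end CheckMatrix

section Polynomial

variable {F : Type} [Field F] {n : ℕ}

theorem bch_bound_s10 {γ δ : F} {s : ℕ} (hγ : IsPrimitiveRoot γ n) (hδ : δ ≠ 0) {c : Fin n → F}
    (hc0 : c ≠ 0) (hc : ∀ j < s, ∑ i : Fin n, c i * (δ * γ ^ j) ^ (i : ℕ) = 0) :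
    s + 1 ≤ wt c := by
  classical
  by_contra! hs
  set I : Finset (Fin n) := {i | c i ≠ 0}
  have hI : #I = wt c := by rw [wt]
  set e := I.equivFin.symm
  have hsum (g : Fin n → F) (hg : ∀ i ∉ I, g i = 0) : ∑ a, g (e a) = ∑ i, g i := by
    rw [Equiv.sum_comp e fun x : I ↦ g x, sum_coe_sort I g]
    exact sum_subset (subset_univ I) fun i _ hi ↦ hg i hi
  have hzero := Matrix.eq_zero_of_forall_pow_sum_mul_pow_eq_zero
    (f := fun a ↦ γ ^ ((e a : Fin n) : ℕ)) (v := fun a ↦ c (e a) * δ ^ ((e a : Fin n) : ℕ))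
    (fun a a' h ↦ e.injective (Subtype.ext (Fin.ext (hγ.pow_inj (e a).1.2 (e a').1.2 h))))
    fun k ↦ by
      rw [hsum (fun i ↦ c i * δ ^ (i : ℕ) * (γ ^ (i : ℕ)) ^ (k : ℕ))
        fun i hi ↦ by simp [show c i = 0 by simpa [I] using hi], ← hc k (by omega)]
      refine sum_congr rfl fun i _ ↦ ?_
      rw [mul_pow, ← pow_mul, ← pow_mul, mul_comm (k : ℕ), mul_assoc]
  obtain ⟨i, hi⟩ := Function.ne_iff.1 hc0
  have := congrFun hzero (e.symm ⟨i, by simpa [I] using hi⟩)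
  simp only [Equiv.apply_symm_apply, Pi.zero_apply, mul_eq_zero] at this
  exact this.elim hi (pow_ne_zero _ hδ)

open Classical in
theorem card_eval_pow_eq_zero_le {γ : F} (hγ : IsPrimitiveRoot γ n) {p : F[X]} (hp : p ≠ 0) :
    #{i : Fin n | p.eval (γ ^ (i : ℕ)) = 0} ≤ p.natDegree :=
  calc #{i : Fin n | p.eval (γ ^ (i : ℕ)) = 0}
      ≤ #p.roots.toFinset :=
        card_le_card_of_injOn (fun i ↦ γ ^ (i : ℕ)) (fun i hi ↦ by simpa [hp] using hi)
          fun i _ i' _ h ↦ Fin.ext (hγ.pow_inj i.2 i'.2 h)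
    _ ≤ Multiset.card p.roots := Multiset.toFinset_card_le _
    _ ≤ p.natDegree := card_roots' p

open Classical in
theorem card_eval_add_C_mul_X_pow_eq_zero_le {γ : F} (hγ : IsPrimitiveRoot γ n) {ℓ : ℕ}
    (hℓ : ℓ < n) {c : F} (hc : c ≠ 0) (q : F[X]) :
    #{i : Fin n | (q + C c * X ^ ℓ).eval (γ ^ (i : ℕ)) = 0} ≤ n - ℓ + q.natDegree := by
  set p := C c + X ^ (n - ℓ) * q
  have hp : p ≠ 0 := fun h ↦ hc (by
    simpa [p, show 0 ≠ n - ℓ by omega] using congr_arg (coeff · 0) h)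
  have hpdeg : p.natDegree ≤ n - ℓ + q.natDegree :=
    (natDegree_add_le _ _).trans (max_le (by simp) (natDegree_mul_le.trans (by simp)))
  refine le_trans (card_le_card fun i hi ↦ ?_) ((card_eval_pow_eq_zero_le hγ hp).trans hpdeg)
  have hxn : (γ ^ (i : ℕ)) ^ n = 1 := by
    rw [← pow_mul, mul_comm, pow_mul, hγ.pow_eq_one, one_pow]
  have hpx : p.eval (γ ^ (i : ℕ)) =
      (γ ^ (i : ℕ)) ^ (n - ℓ) * (q + C c * X ^ ℓ).eval (γ ^ (i : ℕ)) := by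
    simp only [p, eval_add, eval_C, eval_mul, eval_pow, eval_X]
    rw [mul_add, ← mul_assoc, mul_comm _ c, mul_assoc, ← pow_add, Nat.sub_add_cancel hℓ.le, hxn]
    ring
  simp only [mem_filter, mem_univ, true_and] at hi ⊢
  rw [hpx, hi, mul_zero]

end Polynomial

section GapCode

variable {F : Type} [Field F] {n m ℓ : ℕ}

def gapExp (m ℓ : ℕ) : Fin (m + 1) → ℕ :=
  Fin.lastCases (motive := fun _ ↦ ℕ) ℓ fun j ↦ j

@[simp] theorem gapExp_castSucc (j : Fin m) : gapExp m ℓ j.castSucc = j := by simp [gapExp]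

@[simp] theorem gapExp_last : gapExp m ℓ (Fin.last m) = ℓ := by simp [gapExp]

theorem union_singleton_eq_range_gapExp {M : Type} [Monoid M] (α : M) (t b m ℓ : ℕ) :
    {x : M | ∃ j < m, x = α ^ (t + j * b)} ∪ {α ^ (t + ℓ * b)} =
      Set.range fun j : Fin (m + 1) ↦ α ^ (t + gapExp m ℓ j * b) := by
  ext x
  simp [Fin.exists_fin_succ', Fin.exists_iff, eq_comm, or_comm]

open Classical in
theorem two_mul_card_eval_gapExp_eq_zero_add_one_le {γ : F} (hγ : IsPrimitiveRoot γ n)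
    (hm : 0 < m) (hmℓ : m < ℓ) (hℓ : ℓ < n) {y : Fin (m + 1) → F} (hy : y ≠ 0) :
    2 * #{i : Fin n | (∑ j, C (y j) * X ^ gapExp m ℓ j).eval (γ ^ (i : ℕ)) = 0} + 1 ≤ n + m := by
  rw [Fin.sum_univ_castSucc]
  simp only [gapExp_castSucc, gapExp_last]
  set q := ∑ j : Fin m, C (y j.castSucc) * X ^ (j : ℕ)
  have hqdeg : q.natDegree ≤ m - 1 := natDegree_sum_le_of_forall_le _ _ fun j _ ↦
    (natDegree_C_mul_X_pow_le _ _).trans (by omega)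
  by_cases hlast : y (Fin.last m) = 0
  · obtain ⟨j, hj⟩ : ∃ j : Fin m, y j.castSucc ≠ 0 := by
      obtain ⟨j, hj⟩ := Function.ne_iff.1 hy
      induction j using Fin.lastCases with
      | last => exact absurd hlast hj
      | cast j => exact ⟨j, hj⟩
    have hq : q ≠ 0 := fun h ↦ hj (by
      simpa [q, finsetSum_coeff, coeff_C_mul_X_pow, Fin.val_eq_val] using congr_arg (coeff · j) h)
    have := card_eval_pow_eq_zero_le hγ hq
    simp only [hlast, map_zero, zero_mul, add_zero]
    omega
  · have hg : q + C (y (Fin.last m)) * X ^ ℓ ≠ 0 := fun h ↦ hlast (by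
      simpa [coeff_eq_zero_of_natDegree_lt (show q.natDegree < ℓ by omega)]
        using congr_arg (coeff · ℓ) h)
    have hgdeg : (q + C (y (Fin.last m)) * X ^ ℓ).natDegree ≤ ℓ :=
      (natDegree_add_le _ _).trans (max_le (by omega) (natDegree_C_mul_X_pow_le _ _))
    have := card_eval_pow_eq_zero_le hγ hg
    have := card_eval_add_C_mul_X_pow_eq_zero_le hγ hℓ hlast q
    omega

theorem vecMul_checkMatrix_pow_apply {ι : Type} [Fintype ι] (α : F) (t b : ℕ) (e : ι → ℕ)
    (y : ι → F) (i : Fin n) :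
    (y ᵥ* checkMatrix n fun j ↦ α ^ (t + e j * b)) i =
      α ^ (t * i) * (∑ j, C (y j) * X ^ e j).eval ((α ^ b) ^ (i : ℕ)) := by
  simp only [vecMul, dotProduct, checkMatrix, of_apply, eval_finsetSum, eval_mul, eval_C,
    eval_pow, eval_X, mul_sum]
  refine sum_congr rfl fun j _ ↦ ?_
  rw [← pow_mul, ← pow_mul, ← pow_mul, show (t + e j * b) * i = t * i + b * (i * e j) by ring,
    pow_add]
  ring

open Classical in
theorem le_two_mul_wt_vecMul_checkMatrix_gapExp {α : F} (hα : IsPrimitiveRoot α n) {b t : ℕ}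
    (hb : b.Coprime n) (hm : 0 < m) (hmℓ : m < ℓ) (hℓ : ℓ < n) {y : Fin (m + 1) → F}
    (hy : y ≠ 0) :
    n - m + 1 ≤ 2 * wt (y ᵥ* checkMatrix n fun j ↦ α ^ (t + gapExp m ℓ j * b)) := by
  have := two_mul_card_eval_gapExp_eq_zero_add_one_le (hα.pow_of_coprime b hb) hm hmℓ hℓ hy
  have hwt := wt_add_card_filter_eq_zero (y ᵥ* checkMatrix n fun j ↦ α ^ (t + gapExp m ℓ j * b))
  simp only [vecMul_checkMatrix_pow_apply, mul_eq_zero, pow_eq_zero_iff', hα.ne_zero (by omega),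
    false_and, false_or] at hwt
  omega

theorem le_wt_of_mem_ker_checkMatrix_gapExp {α : F} (hα : IsPrimitiveRoot α n) {b t : ℕ}
    (hb : b.Coprime n) {c : Fin n → F}
    (hc : c ∈ LinearMap.ker (checkMatrix n fun j ↦ α ^ (t + gapExp m ℓ j * b)).mulVecLin)
    (hc0 : c ≠ 0) : m + 1 ≤ wt c := by
  obtain ⟨i, -⟩ := Function.ne_iff.1 hc0
  refine bch_bound_s10 (hα.pow_of_coprime b hb) (pow_ne_zero t (hα.ne_zero i.pos.ne')) hc0
    fun j hj ↦ ?_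
  simpa [-Fin.castSucc_mk, mulVec, dotProduct, checkMatrix, pow_add, pow_mul, mul_comm] using
    congrFun (show _ *ᵥ c = 0 from hc) (Fin.castSucc ⟨j, hj⟩)

end GapCode

theorem stmt10_general (F : Type) [Field F] (n m b t ℓ : ℕ)
    (hm : 0 < m)
    (hb : Nat.Coprime b n)
    (hℓ1 : m + 1 ≤ ℓ) (hℓ2 : ℓ ≤ n - 2)
    (α : F) (hα : IsPrimitiveRoot α n)
    (A : Set F)
    (hAdef : A = {x : F | ∃ j < m, x = α ^ (t + j * b)} ∪ {α ^ (t + ℓ * b)})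
    (dA : ℕ)
    (hdA : IsMinDist (dualSet F n (cyclicCode F n A : Set (Fin n → F))) dA) :
    HasLocality (cyclicCode F n A : Set (Fin n → F)) (dA - 1) 2 ∧
    ∃ d : ℕ, IsMinDist (cyclicCode F n A : Set (Fin n → F)) d ∧
      d = n - (n - m - 1) - ceilDiv' (n - m - 1) (dA - 1) + 2 := by
  subst hAdef
  rw [union_singleton_eq_range_gapExp, cyclicCode_range_eq_ker] at hdA ⊢
  set H := checkMatrix n fun j ↦ α ^ (t + gapExp m ℓ j * b)
  have hrow (y : Fin (m + 1) → F) (hy : y ≠ 0) : n - m + 1 ≤ 2 * wt (y ᵥ* H) :=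
    le_two_mul_wt_vecMul_checkMatrix_gapExp hα hb hm (by omega) (by omega) hy
  have hdA_ge : n - m + 1 ≤ 2 * dA := by
    obtain ⟨v, hv, hv0, rfl⟩ := hdA.1
    obtain ⟨y, rfl⟩ := (mem_dualSet_ker_mulVecLin_iff H).1 hv
    exact hrow y (by rintro rfl; simp at hv0)
  refine ⟨hasLocality_ker_checkMatrix (fun j ↦ by
    rw [← pow_mul, mul_comm, pow_mul, hα.pow_eq_one, one_pow]) hdA, ?_⟩
  obtain ⟨c₁, hc₁, hc₁0, hc₁wt⟩ := exists_mem_ker_mulVecLin_wt_le H (by simp; omega)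
  obtain ⟨d, hd⟩ := exists_isMinDist ⟨c₁, hc₁, hc₁0⟩
  refine ⟨d, hd, ?_⟩
  obtain ⟨c, hc, hc0, rfl⟩ := hd.1
  have := le_wt_of_mem_ker_checkMatrix_gapExp hα hb hc hc0
  have := hd.2 c₁ hc₁ hc₁0
  simp only [Fintype.card_fin] at hc₁wt
  rcases (show wt c = m + 1 ∨ wt c = m + 2 by omega) with hwt | hwt
  · obtain ⟨v, hv, hv0, hvwt⟩ := exists_mem_dualSet_ker_mulVecLin_wt_add_le H
      (fun y hy ↦ by_contra fun hy0 ↦ by simpa [hy, wt] using hrow y hy0) hc hc0 (by simp; omega)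
    have := hdA.2 v hv hv0
    rw [ceilDiv', Nat.div_eq_of_lt_le (k := 2)] <;> omega
  · obtain ⟨v, hv, hv0, hvwt⟩ := hdA.1
    have := le_wt_of_mem_dualSet_ker_mulVecLin H (fun c' hc' hc'0 ↦ by
      have := hd.2 c' hc' hc'0; simp only [Fintype.card_fin]; omega) hv hv0
    simp only [Fintype.card_fin] at this
    rw [ceilDiv', Nat.div_eq_of_lt_le (k := 1)] <;> omega

/-- Corollary 4.6 of the paper: `C_A` is always an optimal cyclic
`r`-LRC with `r = d_A⊥ - 1` (case `δ = 2`). -/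
theorem stmt10 (F : Type) [Field F] [Fintype F] (n m b t ℓ : ℕ)
    (hn : 0 < n) (hm : 0 < m)
    (hdvd : n ∣ Fintype.card F - 1) (hb : Nat.Coprime b n)
    (ht : t ≤ n - 1) (hℓ1 : m + 1 ≤ ℓ) (hℓ2 : ℓ ≤ n - 2)
    (α : F) (hα : IsPrimitiveRoot α n)
    (A : Set F)
    (hAdef : A = {x : F | ∃ j < m, x = α ^ (t + j * b)} ∪ {α ^ (t + ℓ * b)})
    (dA : ℕ)
    (hdA : IsMinDist (dualSet F n (cyclicCode F n A : Set (Fin n → F))) dA) :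
    HasLocality (cyclicCode F n A : Set (Fin n → F)) (dA - 1) 2 ∧
    ∃ d : ℕ, IsMinDist (cyclicCode F n A : Set (Fin n → F)) d ∧
      d = n - (n - m - 1) - ceilDiv' (n - m - 1) (dA - 1) + 2 :=
  stmt10_general F n m b t ℓ hm hb hℓ1 hℓ2 α hα A hAdef dA hdA
end
end

section
/- Let δ ≥ 2, n = 4δ + 2, q a prime power with n | q - 1, α a primitive n-th root of unity in F_q, b coprime to n, and t ∈ {0,...,n-1}. Let A = {α^t, α^{t+b}, α^{t+(δ+1)b}, α^{t+(2δ+1)b}} and B = {1, α^b, ..., α^{(δ-2)b}}. Then the cyclic code C_{AB} with complete defining set AB is an optimal cyclic (δ+2, δ)-LRC over F_q with parameters [4δ+2, δ+4, 2δ]. -/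
noncomputable section

open Polynomial
open scoped Pointwise

/- ===================== auxiliary lemmas ===================== -/

lemma my_sum_split {M : Type*} [AddCommMonoid M] (m : ℕ) (f : ℕ → M) :
    ∑ i ∈ Finset.range (2*m), f i = ∑ i ∈ Finset.range m, (f (2*i) + f (2*i+1)) := by
  induction m with
  | zero => simp
  | succ k ih =>
      have h2 : 2*(k+1) = (2*k)+1+1 := by ring
      rw [h2, Finset.sum_range_succ, Finset.sum_range_succ, ih, Finset.sum_range_succ]
      abel

lemma my_geom {F : Type*} [Field F] {m : ℕ} {x : F} (hxm : x ^ m = 1) (hx : x ≠ 1) :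
    ∑ i ∈ Finset.range m, x ^ i = 0 := by
  have h := geom_sum_mul x m
  rw [hxm, sub_self] at h
  rcases mul_eq_zero.mp h with h' | h'
  · exact h'
  · exact absurd (sub_eq_zero.mp h') hx

lemma my_vand {F : Type*} [Field F] {w : ℕ} (z d : Fin w → F) (hz : Function.Injective z)
    (h : ∀ k : Fin w, ∑ i, d i * z i ^ (k : ℕ) = 0) : d = 0 := by
  classical
  set M : Matrix (Fin w) (Fin w) F := (Matrix.vandermonde z).transpose with hM
  have hdet : M.det ≠ 0 := by
    rw [hM, Matrix.det_transpose, Matrix.det_vandermonde]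
    refine Finset.prod_ne_zero_iff.mpr fun i _ => Finset.prod_ne_zero_iff.mpr fun j hj => ?_
    have : i ≠ j := ne_of_lt (Finset.mem_Ioi.mp hj)
    exact sub_ne_zero.mpr fun e => this (hz e).symm
  have hmv : M.mulVec d = 0 := by
    funext k
    have := h k
    simpa [hM, Matrix.mulVec, Matrix.vandermonde, dotProduct, mul_comm] using this
  exact Matrix.eq_zero_of_mulVec_eq_zero hdet hmv

open Classical in
lemma my_bch {F : Type*} [Field F] {m : ℕ} {η : F} (μ : F) (hη : IsPrimitiveRoot η m)
    (hμ : μ ≠ 0) (c : Fin m → F) (w : ℕ)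
    (hw : (Finset.univ.filter (fun i => c i ≠ 0)).card ≤ w)
    (hroots : ∀ k < w, ∑ i : Fin m, c i * (μ * η ^ k) ^ (i : ℕ) = 0) : c = 0 := by
  classical
  set S : Finset (Fin m) := Finset.univ.filter (fun i => c i ≠ 0) with hS
  set e : Fin S.card → S := fun i => S.equivFin.symm i with he
  set z : Fin S.card → F := fun i => η ^ (((e i : Fin m)) : ℕ) with hzdef
  set d : Fin S.card → F := fun i => c (e i) * μ ^ (((e i : Fin m)) : ℕ) with hddef
  have hz : Function.Injective z := by
    intro i j hij
    have h1 : ((e i : Fin m) : ℕ) = ((e j : Fin m) : ℕ) :=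
      hη.pow_inj (e i : Fin m).isLt (e j : Fin m).isLt hij
    have h2 : (e i : Fin m) = (e j : Fin m) := Fin.ext h1
    have h3 : e i = e j := Subtype.ext h2
    exact S.equivFin.symm.injective h3
  have hsum : ∀ k : Fin S.card, ∑ i, d i * z i ^ (k : ℕ) = 0 := by
    intro k
    have step1 : ∑ i, d i * z i ^ (k : ℕ)
        = ∑ x ∈ S, c x * (μ * η ^ (k : ℕ)) ^ (x : ℕ) := by
      rw [← Finset.sum_coe_sort S (fun x => c x * (μ * η ^ (k : ℕ)) ^ (x : ℕ))]
      rw [← Equiv.sum_comp S.equivFin.symm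
        (fun (x : S) => c (x : Fin m) * (μ * η ^ (k : ℕ)) ^ ((x : Fin m) : ℕ))]
      apply Finset.sum_congr rfl
      intro i _
      simp only [hddef, hzdef, he]
      rw [mul_pow, ← pow_mul, ← pow_mul, mul_comm ((S.equivFin.symm i : Fin m) : ℕ) (k : ℕ)]
      ring
    rw [step1]
    have step2 : ∑ x ∈ S, c x * (μ * η ^ (k : ℕ)) ^ (x : ℕ)
        = ∑ x : Fin m, c x * (μ * η ^ (k : ℕ)) ^ (x : ℕ) := by
      apply Finset.sum_subset (Finset.subset_univ S)
      intro x _ hx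
      have : c x = 0 := by
        by_contra hc
        exact hx (by simp [hS, hc])
      rw [this, zero_mul]
    rw [step2]
    exact hroots k (lt_of_lt_of_le k.isLt hw)
  have hd0 : d = 0 := my_vand z d hz hsum
  funext x
  simp only [Pi.zero_apply]
  by_contra hc
  have hxS : x ∈ S := by simp [hS, hc]
  have : d (S.equivFin ⟨x, hxS⟩) = 0 := by rw [hd0]; rfl
  rw [hddef] at this
  simp only [he, Equiv.symm_apply_apply] at this
  rcases mul_eq_zero.mp this with h | h
  · exact hc h
  · exact absurd h (pow_ne_zero _ hμ)

lemma my_pow_modEq {F : Type*} [Field F] {m : ℕ} {η : F} (hη : IsPrimitiveRoot η m)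
    (hm : 0 < m) {a b : ℕ} (h : η ^ a = η ^ b) : a ≡ b [MOD m] := by
  have hη0 : η ≠ 0 := hη.ne_zero (by omega)
  rcases le_total a b with hab | hab
  · have h1 : η ^ a * η ^ (b - a) = η ^ a * 1 := by
      rw [← pow_add, mul_one]; rw [h]; congr 1; omega
    have h2 : η ^ (b - a) = 1 := mul_left_cancel₀ (pow_ne_zero a hη0) h1
    exact (Nat.modEq_iff_dvd' hab).mpr ((hη.pow_eq_one_iff_dvd _).mp h2)
  · have h1 : η ^ b * η ^ (a - b) = η ^ b * 1 := by
      rw [← pow_add, mul_one]; rw [← h]; congr 1; omega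
    have h2 : η ^ (a - b) = 1 := mul_left_cancel₀ (pow_ne_zero b hη0) h1
    exact ((Nat.modEq_iff_dvd' hab).mpr ((hη.pow_eq_one_iff_dvd _).mp h2)).symm

lemma my_modEq_eq {m a b : ℕ} (h : a ≡ b [MOD m]) (ha : a < m) (hb : b < m) : a = b := by
  have := h
  unfold Nat.ModEq at this
  rwa [Nat.mod_eq_of_lt ha, Nat.mod_eq_of_lt hb] at this

lemma my_not_dvd {m v : ℕ} (h1 : 0 < v) (h2 : v < 3*m) (h3 : v ≠ m) (h4 : v ≠ 2*m) :
    ¬ (m ∣ v) := by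
  rintro ⟨k, hk⟩
  have hk3 : k < 3 := by
    by_contra hge
    push_neg at hge
    have : m * 3 ≤ m * k := Nat.mul_le_mul_left m hge
    omega
  interval_cases k <;> omega

open Classical in
lemma my_key2 {F : Type*} [Field F] (δ : ℕ) (hδ : 2 ≤ δ) {η : F} (μ : F)
    (hη : IsPrimitiveRoot η (2*δ+1)) (hchar : ((2*δ+1 : ℕ) : F) ≠ 0) (hμ : μ ≠ 0)
    (c : Fin (2*δ+1) → F)
    (hroots : ∀ j, j < 2*δ+1 → j ≠ δ → j ≠ 2*δ →
      ∑ i : Fin (2*δ+1), c i * (μ * η ^ j) ^ (i : ℕ) = 0) :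
    c = 0 ∨ (Finset.univ.filter (fun i => c i = 0)).card ≤ 1 := by
  have hη0 : η ≠ 0 := hη.ne_zero (by omega)
  set c' : Fin (2*δ+1) → F := fun i => c i * μ ^ (i : ℕ) with hc'
  set f : ℕ → F := fun j => ∑ i : Fin (2*δ+1), c' i * (η ^ j) ^ (i : ℕ) with hf
  have hroots' : ∀ j, j < 2*δ+1 → j ≠ δ → j ≠ 2*δ → f j = 0 := by
    intro j h1 h2 h3
    rw [hf]
    dsimp only
    have habs : ∑ i : Fin (2*δ+1), c' i * (η ^ j) ^ (i : ℕ)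
        = ∑ i : Fin (2*δ+1), c i * (μ * η ^ j) ^ (i : ℕ) := by
      apply Finset.sum_congr rfl
      intro i _
      rw [hc', mul_pow]
      ring
    rw [habs]
    exact hroots j h1 h2 h3
  have hdft : ∀ i0 : Fin (2*δ+1), ((2*δ+1 : ℕ) : F) * c' i0
      = f δ * η ^ (δ * (2*δ+1 - (i0:ℕ))) + f (2*δ) * η ^ ((2*δ) * (2*δ+1 - (i0:ℕ))) := by
    intro i0
    have way1 : ∑ j ∈ Finset.range (2*δ+1), f j * η ^ (j * (2*δ+1 - (i0:ℕ)))
        = f δ * η ^ (δ * (2*δ+1 - (i0:ℕ))) + f (2*δ) * η ^ ((2*δ) * (2*δ+1 - (i0:ℕ))) := by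
      rw [← Finset.sum_subset (s₁ := ({δ, 2*δ} : Finset ℕ))
        (by
          intro x hx
          simp only [Finset.mem_insert, Finset.mem_singleton] at hx
          rcases hx with h | h <;> (subst h; simp only [Finset.mem_range]; omega))
        (by
          intro x hx1 hx2
          simp only [Finset.mem_insert, Finset.mem_singleton] at hx2
          push_neg at hx2
          rw [hroots' x (Finset.mem_range.mp hx1) hx2.1 hx2.2, zero_mul])]
      rw [Finset.sum_pair (by omega : δ ≠ 2*δ)]
    have way2 : ∑ j ∈ Finset.range (2*δ+1), f j * η ^ (j * (2*δ+1 - (i0:ℕ)))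
        = ((2*δ+1 : ℕ) : F) * c' i0 := by
      rw [hf]
      dsimp only
      have e1 : ∀ j ∈ Finset.range (2*δ+1),
          (∑ i : Fin (2*δ+1), c' i * (η ^ j) ^ (i : ℕ)) * η ^ (j * (2*δ+1 - (i0:ℕ)))
          = ∑ i : Fin (2*δ+1), c' i * (η ^ ((i:ℕ) + (2*δ+1 - (i0:ℕ)))) ^ j := by
        intro j _
        rw [Finset.sum_mul]
        apply Finset.sum_congr rfl
        intro i _
        rw [mul_assoc]
        congr 1
        rw [← pow_mul, ← pow_add,
          show j * (i:ℕ) + j * (2*δ+1 - (i0:ℕ)) = ((i:ℕ) + (2*δ+1 - (i0:ℕ))) * j by ring,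
          pow_mul]
      rw [Finset.sum_congr rfl e1, Finset.sum_comm]
      have e2 : ∀ i : Fin (2*δ+1),
          ∑ j ∈ Finset.range (2*δ+1), c' i * (η ^ ((i:ℕ) + (2*δ+1 - (i0:ℕ)))) ^ j
          = c' i * ∑ j ∈ Finset.range (2*δ+1), (η ^ ((i:ℕ) + (2*δ+1 - (i0:ℕ)))) ^ j := by
        intro i; rw [Finset.mul_sum]
      rw [Finset.sum_congr rfl (fun i _ => e2 i)]
      rw [Finset.sum_eq_single i0
        (by
          intro i _ hne
          have hgeo : ∑ j ∈ Finset.range (2*δ+1), (η ^ ((i:ℕ) + (2*δ+1 - (i0:ℕ)))) ^ j = 0 := by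
            apply my_geom
            · rw [← pow_mul, mul_comm, pow_mul, hη.pow_eq_one, one_pow]
            · intro hx1
              have hdvd := (hη.pow_eq_one_iff_dvd _).mp hx1
              have hi := i.isLt
              have hi0 := i0.isLt
              have hne' : (i : ℕ) ≠ (i0 : ℕ) := fun h => hne (Fin.ext h)
              exact my_not_dvd (by omega) (by omega) (by omega) (by omega) hdvd
          rw [hgeo, mul_zero])
        (by intro h; exact absurd (Finset.mem_univ i0) h)]
      have : (i0:ℕ) + (2*δ+1 - (i0:ℕ)) = 2*δ+1 := by omega
      rw [this, hη.pow_eq_one]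
      simp [mul_comm]
    rw [← way1, way2]
  have hzrel : ∀ i0 : Fin (2*δ+1), c i0 = 0 →
      f δ * η ^ (δ * (i0:ℕ)) + f (2*δ) = 0 := by
    intro i0 h0
    have h1 := hdft i0
    rw [hc'] at h1
    dsimp only at h1
    rw [h0, zero_mul, mul_zero] at h1
    set X := η ^ (δ * (2*δ+1 - (i0:ℕ))) with hXdef
    set Y := η ^ (δ * (i0:ℕ)) with hYdef
    have hXsq : η ^ ((2*δ) * (2*δ+1 - (i0:ℕ))) = X ^ 2 := by
      rw [hXdef, ← pow_mul]
      congr 1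
      ring
    rw [hXsq] at h1
    have hXinv : X * Y = 1 := by
      rw [hXdef, hYdef, ← pow_add]
      have he : δ * (2*δ+1 - (i0:ℕ)) + δ * (i0:ℕ) = (2*δ+1) * δ := by
        have := i0.isLt
        rw [← Nat.mul_add]
        have h3 : 2*δ+1 - (i0:ℕ) + (i0:ℕ) = 2*δ+1 := by omega
        rw [h3]
        ring
      rw [he, pow_mul, hη.pow_eq_one, one_pow]
    linear_combination (-(Y^2)) * h1 - (f δ * Y + f (2*δ) * (1 + X*Y)) * hXinv
  by_cases h2 : ∃ i1 i2 : Fin (2*δ+1), i1 ≠ i2 ∧ c i1 = 0 ∧ c i2 = 0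
  · obtain ⟨i1, i2, hne, hz1, hz2⟩ := h2
    have e1 := hzrel i1 hz1
    have e2 := hzrel i2 hz2
    by_cases hu : f δ = 0
    · have hv : f (2*δ) = 0 := by
        rw [hu, zero_mul, zero_add] at e1
        exact e1
      left
      funext i
      show c i = 0
      have hd := hdft i
      rw [hu, hv, zero_mul, zero_mul, add_zero] at hd
      have hc0 : c' i = 0 := by
        rcases mul_eq_zero.mp hd with h | h
        · exact absurd h hchar
        · exact h
      rw [hc'] at hc0
      rcases mul_eq_zero.mp hc0 with h | h
      · exact h
      · exact absurd h (pow_ne_zero _ hμ)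
    · exfalso
      have heq : f δ * η ^ (δ * (i1:ℕ)) = f δ * η ^ (δ * (i2:ℕ)) := by
        linear_combination e1 - e2
      have heq2 : η ^ (δ * (i1:ℕ)) = η ^ (δ * (i2:ℕ)) := mul_left_cancel₀ hu heq
      have hmod : δ * (i1:ℕ) ≡ δ * (i2:ℕ) [MOD 2*δ+1] := my_pow_modEq hη (by omega) heq2
      have hg : Nat.gcd (2*δ+1) δ = 1 := by
        have h1' : Nat.Coprime (1 + 2*δ) δ :=
          (Nat.coprime_add_mul_right_left 1 δ 2).mpr (Nat.coprime_one_left δ)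
        have he' : 1 + 2*δ = 2*δ+1 := by omega
        rw [he'] at h1'
        exact h1'
      have hmod2 : (i1:ℕ) ≡ (i2:ℕ) [MOD 2*δ+1] := Nat.ModEq.cancel_left_of_coprime hg hmod
      have : (i1:ℕ) = (i2:ℕ) := my_modEq_eq hmod2 i1.isLt i2.isLt
      exact hne (Fin.ext this)
  · right
    rw [Finset.card_le_one]
    intro a ha b hb
    simp only [Finset.mem_filter, Finset.mem_univ, true_and] at ha hb
    by_contra hab
    exact h2 ⟨a, b, hab, ha, hb⟩

def halfE {γ : Type*} {n m : ℕ} (h : n = 2*m) (c : Fin n → γ) : Fin m → γ :=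
  fun i => c ⟨2*i.1, by have := i.isLt; omega⟩

def halfO {γ : Type*} {n m : ℕ} (h : n = 2*m) (c : Fin n → γ) : Fin m → γ :=
  fun i => c ⟨2*i.1+1, by have := i.isLt; omega⟩

lemma fin_double_sum {M : Type*} [AddCommMonoid M] {n m : ℕ} (h : n = 2*m) (f : Fin n → M) :
    ∑ i, f i = ∑ i : Fin m, (halfE h f i + halfO h f i) := by
  classical
  set fext : ℕ → M := fun j => if hj : j < n then f ⟨j, hj⟩ else 0 with hfext
  have e1 : ∑ i, f i = ∑ i : Fin n, fext (i : ℕ) := by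
    apply Finset.sum_congr rfl
    intro i _
    rw [hfext]
    simp [i.isLt]
  rw [e1, Fin.sum_univ_eq_sum_range fext n]
  have e15 : ∑ i ∈ Finset.range n, fext i = ∑ i ∈ Finset.range (2*m), fext i := by rw [h]
  rw [e15, my_sum_split]
  rw [← Fin.sum_univ_eq_sum_range (fun j => fext (2*j) + fext (2*j+1)) m]
  apply Finset.sum_congr rfl
  intro i _
  have h1 : 2*(i:ℕ) < n := by have := i.isLt; omega
  have h2 : 2*(i:ℕ)+1 < n := by have := i.isLt; omega
  simp only [hfext, dif_pos h1, dif_pos h2]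
  rfl

lemma ev_split {F : Type*} [Field F] {n m : ℕ} (h : n = 2*m) (c : Fin n → F) (β : F) :
    ∑ i : Fin n, c i * β ^ (i : ℕ)
      = (∑ i : Fin m, halfE h c i * (β^2) ^ (i : ℕ))
        + β * ∑ i : Fin m, halfO h c i * (β^2) ^ (i : ℕ) := by
  rw [fin_double_sum h (fun i => c i * β ^ (i : ℕ))]
  rw [Finset.mul_sum, Finset.sum_add_distrib]
  congr 1
  · apply Finset.sum_congr rfl
    intro i _
    show c _ * β ^ (2*(i:ℕ)) = halfE h c i * (β^2) ^ (i:ℕ)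
    rw [← pow_mul]
    rfl
  · apply Finset.sum_congr rfl
    intro i _
    show c _ * β ^ (2*(i:ℕ)+1) = β * (halfO h c i * (β^2) ^ (i:ℕ))
    rw [pow_succ, ← pow_mul]
    show halfO h c i * (β ^ (2*(i:ℕ)) * β) = β * (halfO h c i * β ^ (2*(i:ℕ)))
    ring

open Classical in
lemma wt_split {F : Type} [Zero F] {n m : ℕ} (h : n = 2*m) (c : Fin n → F) :
    wt c = wt (halfE h c) + wt (halfO h c) := by
  rw [wt, wt, wt, Finset.card_filter, Finset.card_filter, Finset.card_filter]
  rw [fin_double_sum h (fun i => if c i ≠ 0 then 1 else 0)]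
  rw [Finset.sum_add_distrib]
  rfl

lemma halves_zero {F : Type} [Zero F] {n m : ℕ} (h : n = 2*m) (c : Fin n → F)
    (hE : halfE h c = 0) (hO : halfO h c = 0) : c = 0 := by
  funext i
  show c i = 0
  have hi := i.isLt
  rcases Nat.mod_two_eq_zero_or_one i.1 with hp | hp
  · have hlt : i.1/2 < m := by omega
    have he : i = (⟨2*(i.1/2), by omega⟩ : Fin n) := Fin.ext (by show i.1 = 2*(i.1/2); omega)
    have := congrFun hE ⟨i.1/2, hlt⟩
    rw [he]
    exact this
  · have hlt : i.1/2 < m := by omega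
    have he : i = (⟨2*(i.1/2)+1, by omega⟩ : Fin n) :=
      Fin.ext (by show i.1 = 2*(i.1/2)+1; omega)
    have := congrFun hO ⟨i.1/2, hlt⟩
    rw [he]
    exact this

lemma my_cast_ne {F : Type*} [Field F] [Fintype F] (k : ℕ)
    (h : k ∣ Fintype.card F - 1) : (k : F) ≠ 0 := by
  intro h0
  have hd1 : ringChar F ∣ k := (CharP.cast_eq_zero_iff F (ringChar F) k).mp h0
  have hd2 : ringChar F ∣ Fintype.card F :=
    (CharP.cast_eq_zero_iff F (ringChar F) _).mp (Nat.cast_card_eq_zero F)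
  have hd3 : ringChar F ∣ Fintype.card F - 1 := hd1.trans h
  have hcard : 1 ≤ Fintype.card F := Fintype.card_pos
  have hd4 : ringChar F ∣ 1 := by
    have := Nat.dvd_sub hd2 hd3
    rwa [Nat.sub_sub_self hcard] at this
  have h1 : ((1:ℕ) : F) = 0 :=
    (CharP.cast_eq_zero_iff F (ringChar F) 1).mpr (Nat.dvd_one.mp hd4 ▸ dvd_refl _)
  simp at h1

lemma mem_cyc {F : Type} [Field F] {n : ℕ} {Z : Set F} (c : Fin n → F) :
    c ∈ cyclicCode F n Z ↔ ∀ x ∈ Z, ∑ i : Fin n, c i * x ^ (i : ℕ) = 0 := by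
  constructor
  · intro h x hx
    have h' : ∀ x ∈ Z, ∑ i : Fin n, algebraMap F F (c i) * x ^ (i : ℕ) = 0 := h
    simpa [Algebra.algebraMap_self_apply] using h' x hx
  · intro h
    show ∀ x ∈ Z, ∑ i : Fin n, algebraMap F F (c i) * x ^ (i : ℕ) = 0
    intro x hx
    simpa [Algebra.algebraMap_self_apply] using h x hx

/-- Proposition 4.12 of the paper: for `n = 4δ + 2`, an optimal cyclic
`(δ+2, δ)`-LRC with parameters `[4δ+2, δ+4, 2δ]`. -/
theorem stmt12 (F : Type) [Field F] [Fintype F] (n b t δ : ℕ)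
    (hδ : 2 ≤ δ) (hn : n = 4 * δ + 2)
    (hdvd : n ∣ Fintype.card F - 1) (hb : Nat.Coprime b n)
    (ht : t ≤ n - 1)
    (α : F) (hα : IsPrimitiveRoot α n)
    (A B : Set F)
    (hAdef : A = {α ^ t, α ^ (t + b), α ^ (t + (δ + 1) * b), α ^ (t + (2 * δ + 1) * b)})
    (hBdef : B = {x : F | ∃ j < δ - 1, x = α ^ (j * b)}) :
    HasLocality (cyclicCode F n (A * B) : Set (Fin n → F)) (δ + 2) δ ∧
    Module.finrank F (cyclicCode F n (A * B)) = δ + 4 ∧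
    IsMinDist (cyclicCode F n (A * B) : Set (Fin n → F)) (2 * δ) ∧
    SingletonOpt n (δ + 4) (δ + 2) δ (2 * δ) := by
  have h2m : n = 2*(2*δ+1) := by omega
  have hn0 : n ≠ 0 := by omega
  -- roots and parameters
  set β : ℕ → F := fun j => α ^ (t + j*b) with hβ
  set η : F := (α ^ b) ^ 2 with hηdef
  set μ : F := (α ^ t) ^ 2 with hμdef
  have hα0 : α ≠ 0 := hα.ne_zero hn0
  have hμ0 : μ ≠ 0 := pow_ne_zero _ (pow_ne_zero _ hα0)
  have hβ0 : ∀ j, β j ≠ 0 := fun j => pow_ne_zero _ hα0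
  have hβsq : ∀ j, (β j)^2 = μ * η^j := by
    intro j
    rw [hβ, hηdef, hμdef]
    dsimp only
    simp only [← pow_mul, ← pow_add]
    congr 1
    ring
  have hbodd : b % 2 = 1 := by
    rcases Nat.mod_two_eq_zero_or_one b with h | h
    · exfalso
      have h2b : (2:ℕ) ∣ b := by omega
      have h2n : (2:ℕ) ∣ n := by omega
      have := Nat.dvd_gcd h2b h2n
      rw [hb] at this
      omega
    · exact h
  have hαm : α ^ (2*δ+1) = -1 := by
    have hsq : α ^ (2*δ+1) * α ^ (2*δ+1) = 1 := by
      rw [← pow_add]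
      have : 2*δ+1 + (2*δ+1) = n := by omega
      rw [this, hα.pow_eq_one]
    rcases mul_self_eq_one_iff.mp hsq with h | h
    · exfalso
      exact hα.pow_ne_one_of_pos_of_lt (by omega) (by omega) h
    · exact h
  have hβneg : ∀ j, β (j + (2*δ+1)) = - β j := by
    intro j
    rw [hβ]
    dsimp only
    have he : t + (j + (2*δ+1))*b = (t + j*b) + (2*δ+1)*b := by ring
    rw [he, pow_add, pow_mul, hαm]
    have hob : Odd b := Nat.odd_iff.mpr hbodd
    rw [hob.neg_one_pow]
    ring
  have hηprim : IsPrimitiveRoot η (2*δ+1) := by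
    have h1 : IsPrimitiveRoot (α ^ b) n := hα.pow_of_coprime b hb
    rw [hηdef]
    exact h1.pow (by omega) h2m
  have hchar2 : (2 : F) ≠ 0 := by
    have := my_cast_ne (F := F) 2 (dvd_trans ⟨2*δ+1, by omega⟩ hdvd)
    simpa using this
  have hcharm : ((2*δ+1 : ℕ) : F) ≠ 0 :=
    my_cast_ne (F := F) (2*δ+1) (dvd_trans ⟨2, by omega⟩ hdvd)
  -- defining set indices
  set Jpred : ℕ → Prop := fun j => j < δ ∨ (δ+1 ≤ j ∧ j < 2*δ) ∨ (2*δ+1 ≤ j ∧ j < 3*δ)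
    with hJpred
  have hprodmem : ∀ j, Jpred j → β j ∈ A * B := by
    intro j hj
    have key : ∀ a j2 : ℕ, α ^ (t + a*b) ∈ A → j2 < δ - 1 → j = a + j2 → β j ∈ A * B := by
      intro a j2 ha hj2 hje
      have hBmem : α ^ (j2*b) ∈ B := by
        rw [hBdef]
        exact ⟨j2, hj2, rfl⟩
      have := Set.mul_mem_mul ha hBmem
      have heq : α ^ (t + a*b) * α ^ (j2*b) = β j := by
        rw [hβ]
        dsimp only
        rw [← pow_add]
        congr 1
        rw [hje]
        ring
      rwa [heq] at this
    have hA0 : α ^ (t + 0*b) ∈ A := by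
      rw [hAdef]
      left
      norm_num
    have hA1 : α ^ (t + 1*b) ∈ A := by
      rw [hAdef]
      right; left
      norm_num
    have hA2 : α ^ (t + (δ+1)*b) ∈ A := by
      rw [hAdef]
      right; right; left
      rfl
    have hA3 : α ^ (t + (2*δ+1)*b) ∈ A := by
      rw [hAdef]
      right; right; right
      rfl
    rw [hJpred] at hj
    rcases hj with h | ⟨h1, h2⟩ | ⟨h1, h2⟩
    · rcases Nat.lt_or_ge j (δ-1) with h' | h'
      · exact key 0 j hA0 h' (by omega)
      · exact key 1 (δ-2) hA1 (by omega) (by omega)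
    · exact key (δ+1) (j - (δ+1)) hA2 (by omega) (by omega)
    · exact key (2*δ+1) (j - (2*δ+1)) hA3 (by omega) (by omega)
  have hABshape : ∀ x ∈ A * B, ∃ j, Jpred j ∧ x = β j := by
    intro x hx
    rw [Set.mem_mul] at hx
    obtain ⟨a, ha, y, hy, hxy⟩ := hx
    rw [hBdef] at hy
    obtain ⟨j2, hj2, hyv⟩ := hy
    rw [hAdef] at ha
    have key : ∀ a0 : ℕ, a = α ^ (t + a0*b) → x = β (a0 + j2) := by
      intro a0 hav
      rw [← hxy, hav, hyv, hβ]
      dsimp only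
      rw [← pow_add]
      congr 1
      ring
    simp only [Set.mem_insert_iff, Set.mem_singleton_iff] at ha
    rcases ha with h | h | h | h
    · exact ⟨0 + j2, by rw [hJpred]; left; omega, key 0 (by rw [h]; norm_num)⟩
    · exact ⟨1 + j2, by rw [hJpred]; left; omega, key 1 (by rw [h]; norm_num)⟩
    · exact ⟨(δ+1) + j2, by rw [hJpred]; right; left; omega, key (δ+1) (by rw [h])⟩
    · exact ⟨(2*δ+1) + j2, by rw [hJpred]; right; right; omega, key (2*δ+1) (by rw [h])⟩
  have hmemJ : ∀ c : Fin n → F, c ∈ cyclicCode F n (A * B) → ∀ j, Jpred j →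
      ∑ i : Fin n, c i * (β j) ^ (i:ℕ) = 0 := by
    intro c hc j hj
    exact (mem_cyc c).mp hc (β j) (hprodmem j hj)
  -- even/odd root structure
  have hEO : ∀ c : Fin n → F, c ∈ cyclicCode F n (A * B) → ∀ j, j < δ - 1 →
      (∑ i : Fin (2*δ+1), halfE h2m c i * (μ * η ^ j) ^ (i:ℕ) = 0) ∧
      (∑ i : Fin (2*δ+1), halfO h2m c i * (μ * η ^ j) ^ (i:ℕ) = 0) := by
    intro c hc j hj
    have hJ1 : Jpred j := by rw [hJpred]; left; omega
    have hJ2 : Jpred (j + (2*δ+1)) := by rw [hJpred]; right; right; omega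
    have e1 := hmemJ c hc j hJ1
    have e2 := hmemJ c hc (j + (2*δ+1)) hJ2
    rw [ev_split h2m c (β j), hβsq j] at e1
    rw [ev_split h2m c (β (j + (2*δ+1))), hβneg j, neg_sq, hβsq j] at e2
    set SE := ∑ i : Fin (2*δ+1), halfE h2m c i * (μ * η ^ j) ^ (i:ℕ) with hSE
    set SO := ∑ i : Fin (2*δ+1), halfO h2m c i * (μ * η ^ j) ^ (i:ℕ) with hSO
    have hE : SE = 0 := by
      have h2 : (2:F) * SE = 0 := by linear_combination e1 + e2
      rcases mul_eq_zero.mp h2 with h | h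
      · exact absurd h hchar2
      · exact h
    have hO : SO = 0 := by
      have h2 : (2:F) * (β j * SO) = 0 := by linear_combination e1 - e2
      rcases mul_eq_zero.mp h2 with h | h
      · exact absurd h hchar2
      · rcases mul_eq_zero.mp h with h' | h'
        · exact absurd h' (hβ0 j)
        · exact h'
    exact ⟨hE, hO⟩
  -- weight bound from the short root run
  have hwge : ∀ v : Fin (2*δ+1) → F, v ≠ 0 →
      (∀ j, j < δ - 1 → ∑ i : Fin (2*δ+1), v i * (μ * η ^ j) ^ (i:ℕ) = 0) → δ ≤ wt v := by
    intro v hv hroots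
    by_contra hlt
    push_neg at hlt
    apply hv
    apply my_bch μ hηprim hμ0 v (δ - 1)
    · show wt v ≤ δ - 1
      omega
    · exact fun k hk => hroots k hk
  -- weight bound from the long root run
  have hwge2 : ∀ v : Fin (2*δ+1) → F, v ≠ 0 →
      (∀ j, j < 2*δ+1 → j ≠ δ → j ≠ 2*δ →
        ∑ i : Fin (2*δ+1), v i * (μ * η ^ j) ^ (i:ℕ) = 0) → 2*δ ≤ wt v := by
    intro v hv hroots
    rcases my_key2 δ hδ μ hηprim hcharm hμ0 v hroots with h | h
    · exact absurd h hv
    · classical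
      have hsplit := Finset.card_filter_add_card_filter_not
        (s := (Finset.univ : Finset (Fin (2*δ+1)))) (p := fun i => v i = 0)
      have hwt : wt v = (Finset.univ.filter (fun i => ¬ v i = 0)).card := by
        rw [wt]
      have hcardu : (Finset.univ : Finset (Fin (2*δ+1))).card = 2*δ+1 := by
        simp
      omega
  classical
  -- enumeration of the defining set
  set g : ℕ → ℕ := fun k => if k < δ then k else if k < 2*δ-1 then k+1 else k+2 with hg
  have hgJ : ∀ k, k < 3*δ-2 → Jpred (g k) := by
    intro k hk
    rw [hg, hJpred]
    dsimp only
    split_ifs <;> omega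
  have hgbound : ∀ k, k < 3*δ-2 → g k < n := by
    intro k hk
    rw [hg]
    dsimp only
    split_ifs <;> omega
  have hginj : ∀ k k', k < 3*δ-2 → k' < 3*δ-2 → g k = g k' → k = k' := by
    intro k k' hk hk' h
    rw [hg] at h
    dsimp only at h
    split_ifs at h <;> omega
  have hJg : ∀ j, Jpred j → ∃ k, k < 3*δ-2 ∧ g k = j := by
    intro j hj
    rw [hJpred] at hj
    rcases hj with h | ⟨h1, h2⟩ | ⟨h1, h2⟩
    · exact ⟨j, by omega, by rw [hg]; dsimp only; rw [if_pos (by omega)]⟩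
    · refine ⟨j - 1, by omega, ?_⟩
      rw [hg]
      dsimp only
      rw [if_neg (by omega), if_pos (by omega)]
      omega
    · refine ⟨j - 2, by omega, ?_⟩
      rw [hg]
      dsimp only
      rw [if_neg (by omega), if_neg (by omega)]
      omega
  set node : Fin (3*δ-2) → F := fun k => β (g k.1) with hnode
  have hnodeinj : Function.Injective node := by
    intro k k' h
    rw [hnode] at h
    dsimp only at h
    have hmod : t + g k.1 * b ≡ t + g k'.1 * b [MOD n] := my_pow_modEq hα (by omega) h
    have hmod2 : g k.1 * b ≡ g k'.1 * b [MOD n] := Nat.ModEq.add_left_cancel' t hmod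
    have hmod3 : g k.1 ≡ g k'.1 [MOD n] :=
      Nat.ModEq.cancel_right_of_coprime (Nat.Coprime.symm hb) hmod2
    have := my_modEq_eq hmod3 (hgbound k.1 k.isLt) (hgbound k'.1 k'.isLt)
    exact Fin.ext (hginj k.1 k'.1 k.isLt k'.isLt this)
  -- the evaluation linear map at the defining set
  set Phi : (Fin n → F) →ₗ[F] (Fin (3*δ-2) → F) :=
    { toFun := fun c => fun k => ∑ i : Fin n, c i * node k ^ (i:ℕ)
      map_add' := by
        intro x y
        funext k
        simp [add_mul, Finset.sum_add_distrib]
      map_smul' := by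
        intro r x
        funext k
        simp [Finset.mul_sum, mul_assoc] } with hPhi
  have hPhiapp : ∀ c k, Phi c k = ∑ i : Fin n, c i * node k ^ (i:ℕ) := fun c k => rfl
  have hker : cyclicCode F n (A * B) = LinearMap.ker Phi := by
    ext c
    rw [LinearMap.mem_ker, mem_cyc]
    constructor
    · intro h
      funext k
      show Phi c k = 0
      rw [hPhiapp]
      exact h (node k) (hprodmem (g k.1) (hgJ k.1 k.isLt))
    · intro h x hx
      obtain ⟨j, hj, hxj⟩ := hABshape x hx
      obtain ⟨k, hk, hgk⟩ := hJg j hj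
      have h1 : Phi c ⟨k, hk⟩ = 0 := by rw [h]; rfl
      rw [hPhiapp] at h1
      rw [hxj, ← hgk]
      exact h1
  have hsurj : Function.Surjective Phi := by
    intro v
    have hinjOn : Set.InjOn node ↑(Finset.univ : Finset (Fin (3*δ-2))) :=
      fun a _ b _ h => hnodeinj h
    set p := Lagrange.interpolate Finset.univ node v with hp
    have hdeg : p.degree < ((Finset.univ : Finset (Fin (3*δ-2))).card : WithBot ℕ) :=
      Lagrange.degree_interpolate_lt v hinjOn
    have hcardlt : (Finset.univ : Finset (Fin (3*δ-2))).card ≤ n := by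
      simp only [Finset.card_univ, Fintype.card_fin]
      omega
    have hnat : p.natDegree < n := by
      rcases eq_or_ne p 0 with h | h
      · rw [h, Polynomial.natDegree_zero]
        omega
      · rw [Polynomial.natDegree_lt_iff_degree_lt h]
        refine lt_of_lt_of_le hdeg ?_
        exact_mod_cast hcardlt
    refine ⟨fun i : Fin n => p.coeff i, ?_⟩
    funext k
    rw [hPhiapp]
    rw [Fin.sum_univ_eq_sum_range (fun i => p.coeff i * node k ^ i) n]
    rw [← Polynomial.eval_eq_sum_range' hnat]
    exact Lagrange.eval_interpolate_at_node v hinjOn (Finset.mem_univ k)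
  have hdim : Module.finrank F (cyclicCode F n (A * B)) = δ + 4 := by
    rw [hker]
    have hrank := LinearMap.finrank_range_add_finrank_ker Phi
    rw [LinearMap.range_eq_top.mpr hsurj, finrank_top,
      Module.finrank_pi, Module.finrank_pi, Fintype.card_fin, Fintype.card_fin] at hrank
    omega
  have hsing : SingletonOpt n (δ + 4) (δ + 2) δ (2 * δ) := by
    unfold SingletonOpt ceilDiv'
    have h1 : δ+4+(δ+2)-1 = (δ+2)*2+1 := by omega
    rw [h1, Nat.mul_add_div (by omega), Nat.div_eq_of_lt (by omega)]
    omega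
  -- minimum distance lower bound
  have hlow : ∀ c : Fin n → F, c ∈ cyclicCode F n (A * B) → c ≠ 0 → 2*δ ≤ wt c := by
    intro c hc hc0
    have hEOc := hEO c hc
    have hwts := wt_split h2m c
    by_cases hE0 : halfE h2m c = 0
    · have hO0 : halfO h2m c ≠ 0 := fun h => hc0 (halves_zero h2m c hE0 h)
      have hroots : ∀ j, j < 2*δ+1 → j ≠ δ → j ≠ 2*δ →
          ∑ i : Fin (2*δ+1), halfO h2m c i * (μ * η^j)^(i:ℕ) = 0 := by
        intro j h1 hne1 hne2
        have hJ : Jpred j := by rw [hJpred]; omega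
        have e := hmemJ c hc j hJ
        rw [ev_split h2m c (β j), hβsq j, hE0] at e
        simp only [Pi.zero_apply, zero_mul, Finset.sum_const_zero, zero_add] at e
        rcases mul_eq_zero.mp e with h | h
        · exact absurd h (hβ0 j)
        · exact h
      have hb2 := hwge2 _ hO0 hroots
      have hwE : wt (halfE h2m c) = 0 := by rw [hE0]; simp [wt]
      omega
    · by_cases hO0 : halfO h2m c = 0
      · have hroots : ∀ j, j < 2*δ+1 → j ≠ δ → j ≠ 2*δ →
            ∑ i : Fin (2*δ+1), halfE h2m c i * (μ * η^j)^(i:ℕ) = 0 := by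
          intro j h1 hne1 hne2
          have hJ : Jpred j := by rw [hJpred]; omega
          have e := hmemJ c hc j hJ
          rw [ev_split h2m c (β j), hβsq j, hO0] at e
          simp only [Pi.zero_apply, zero_mul, Finset.sum_const_zero, mul_zero, add_zero] at e
          exact e
        have hb2 := hwge2 _ hE0 hroots
        have hwO : wt (halfO h2m c) = 0 := by rw [hO0]; simp [wt]
        omega
      · have h1 := hwge _ hE0 (fun j hj => (hEOc j hj).1)
        have h2 := hwge _ hO0 (fun j hj => (hEOc j hj).2)
        omega
  -- explicit codeword of weight 2δ
  set ω : F := η ^ (δ+1) with hω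
  have hη0 : η ≠ 0 := hηprim.ne_zero (by omega)
  have hω0 : ω ≠ 0 := pow_ne_zero _ hη0
  have hcop : Nat.gcd (2*δ+1) (δ+1) = 1 := by
    have hd1 := Nat.gcd_dvd_left (2*δ+1) (δ+1)
    have hd2 := Nat.gcd_dvd_right (2*δ+1) (δ+1)
    have hd3 : Nat.gcd (2*δ+1) (δ+1) ∣ 2*(δ+1) - (2*δ+1) := Nat.dvd_sub (hd2.mul_left 2) hd1
    have he : 2*(δ+1) - (2*δ+1) = 1 := by omega
    rw [he] at hd3
    exact Nat.dvd_one.mp hd3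
  have hωne1 : ∀ i : ℕ, 0 < i → i < 2*δ+1 → ω ^ i ≠ 1 := by
    intro i h1 h2 h
    rw [hω, ← pow_mul] at h
    have hdvd := (hηprim.pow_eq_one_iff_dvd _).mp h
    have hdvd2 : (2*δ+1) ∣ i := (Nat.Coprime.dvd_of_dvd_mul_left hcop hdvd)
    have := Nat.le_of_dvd h1 hdvd2
    omega
  set wc : Fin n → F := fun i => if i.1 % 2 = 1 then
      (μ ^ ((i.1-1)/2))⁻¹ * (ω ^ ((i.1-1)/2) - ω ^ (2*((i.1-1)/2))) else 0 with hwc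
  have hwE0 : halfE h2m wc = 0 := by
    funext i
    show wc ⟨2*i.1, _⟩ = 0
    rw [hwc]
    dsimp only
    rw [if_neg (by omega)]
  have hwO : ∀ i : Fin (2*δ+1), halfO h2m wc i
      = (μ ^ (i.1))⁻¹ * (ω ^ (i.1) - ω ^ (2*(i.1))) := by
    intro i
    show wc ⟨2*i.1+1, _⟩ = _
    rw [hwc]
    dsimp only
    rw [if_pos (by omega)]
    have hidx : (2*(i.1)+1-1)/2 = i.1 := by omega
    rw [hidx]
  have hwOwt : wt (halfO h2m wc) = 2*δ := by
    rw [wt]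
    have hfc : Finset.univ.filter (fun i => halfO h2m wc i ≠ 0)
        = Finset.univ.filter (fun i : Fin (2*δ+1) => i ≠ 0) := by
      apply Finset.filter_congr
      intro i _
      rw [hwO i]
      constructor
      · intro h h0
        apply h
        rw [h0]
        show (μ ^ (0:ℕ))⁻¹ * (ω ^ (0:ℕ) - ω ^ (2*0)) = 0
        norm_num
      · intro h
        have hival : 0 < i.1 := by
          rcases Nat.eq_zero_or_pos i.1 with h' | h'
          · exact absurd (Fin.ext (by simp [h'])) h
          · exact h'
        have hx0 : ω ^ (i.1) ≠ 0 := pow_ne_zero _ hω0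
        have hx1 : ω ^ (i.1) ≠ 1 := hωne1 i.1 hival i.isLt
        have hsub : ω ^ (i.1) - ω ^ (2*(i.1)) ≠ 0 := by
          intro hs
          have hps : ω ^ (2*(i.1)) = ω ^ (i.1) * ω ^ (i.1) := by
            rw [← pow_add]
            congr 1
            omega
          rw [hps] at hs
          have hfac : ω ^ (i.1) * (1 - ω ^ (i.1)) = 0 := by linear_combination hs
          rcases mul_eq_zero.mp hfac with h' | h'
          · exact hx0 h'
          · exact hx1 (by linear_combination -h')
        exact mul_ne_zero (inv_ne_zero (pow_ne_zero _ hμ0)) hsub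
    rw [hfc, Finset.filter_ne' Finset.univ (0 : Fin (2*δ+1)),
      Finset.card_erase_of_mem (Finset.mem_univ _)]
    simp
  have hwcwt : wt wc = 2*δ := by
    rw [wt_split h2m wc, hwOwt, hwE0]
    have hz : wt (0 : Fin (2*δ+1) → F) = 0 := by simp [wt]
    rw [hz]
    omega
  have hwcne : wc ≠ 0 := by
    intro h
    rw [h] at hwcwt
    have hz : wt (0 : Fin n → F) = 0 := by simp [wt]
    omega
  have hwcmem : wc ∈ cyclicCode F n (A * B) := by
    rw [mem_cyc]
    intro x hx
    obtain ⟨j, hj, hxj⟩ := hABshape x hx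
    rw [hxj, ev_split h2m wc (β j), hβsq j, hwE0]
    simp only [Pi.zero_apply, zero_mul, Finset.sum_const_zero, zero_add]
    have hterm : ∀ i : Fin (2*δ+1), halfO h2m wc i * (μ * η^j)^(i.1)
        = (ω * η^j)^(i.1) - (ω^2 * η^j)^(i.1) := by
      intro i
      rw [hwO i, mul_pow μ (η^j)]
      have hcan : (μ ^ (i.1))⁻¹ * μ ^ (i.1) = 1 := inv_mul_cancel₀ (pow_ne_zero _ hμ0)
      calc (μ ^ (i.1))⁻¹ * (ω ^ (i.1) - ω ^ (2*(i.1))) * (μ ^ (i.1) * (η^j) ^ (i.1))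
          = ((μ ^ (i.1))⁻¹ * μ ^ (i.1)) * ((ω ^ (i.1) - ω ^ (2*(i.1))) * (η^j) ^ (i.1)) := by
            ring
        _ = (ω ^ (i.1) - ω ^ (2*(i.1))) * (η^j) ^ (i.1) := by rw [hcan, one_mul]
        _ = (ω * η^j)^(i.1) - (ω^2 * η^j)^(i.1) := by
            rw [mul_pow, mul_pow, ← pow_mul]
            ring
    rw [Finset.sum_congr rfl (fun i _ => hterm i), Finset.sum_sub_distrib]
    have hjb : j < 3*δ ∧ j ≠ δ ∧ j ≠ 2*δ := by
      rw [hJpred] at hj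
      omega
    have hωm1 : ω ^ (2*δ+1) = 1 := by
      rw [hω, ← pow_mul, mul_comm (δ+1) (2*δ+1), pow_mul, hηprim.pow_eq_one, one_pow]
    have hηjm : (η^j) ^ (2*δ+1) = 1 := by
      rw [← pow_mul, mul_comm j (2*δ+1), pow_mul, hηprim.pow_eq_one, one_pow]
    have hω2m : (ω^2) ^ (2*δ+1) = 1 := by
      rw [← pow_mul, mul_comm 2 (2*δ+1), pow_mul, hωm1, one_pow]
    have hgeo1 : ∑ i : Fin (2*δ+1), (ω * η^j)^(i.1) = 0 := by
      rw [Fin.sum_univ_eq_sum_range (fun i => (ω * η^j)^i) (2*δ+1)]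
      apply my_geom
      · rw [mul_pow, hωm1, hηjm, one_mul]
      · rw [hω, ← pow_add]
        intro h
        have hdvd := (hηprim.pow_eq_one_iff_dvd _).mp h
        exact my_not_dvd (by omega) (by omega) (by omega) (by omega) hdvd
    have hgeo2 : ∑ i : Fin (2*δ+1), (ω^2 * η^j)^(i.1) = 0 := by
      rw [Fin.sum_univ_eq_sum_range (fun i => (ω^2 * η^j)^i) (2*δ+1)]
      apply my_geom
      · rw [mul_pow, hω2m, hηjm, one_mul]
      · rw [hω, ← pow_mul, ← pow_add]
        intro h
        have hdvd := (hηprim.pow_eq_one_iff_dvd _).mp h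
        exact my_not_dvd (by omega) (by omega) (by omega) (by omega) hdvd
    rw [hgeo1, hgeo2]
    ring
  -- locality
  have hloc : HasLocality (cyclicCode F n (A * B) : Set (Fin n → F)) (δ + 2) δ := by
    intro i
    rcases Nat.mod_two_eq_zero_or_one i.1 with hpar | hpar
    · set embE : Fin (2*δ+1) → Fin n :=
        fun i' => (⟨2*i'.1, by have := i'.isLt; omega⟩ : Fin n) with hembE
      have hEinj : Function.Injective embE := by
        intro a b h
        rw [hembE] at h
        have h2 : 2*a.1 = 2*b.1 := congrArg Fin.val h
        exact Fin.ext (by omega)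
      refine ⟨Finset.univ.image embE, ?_, ?_, ?_⟩
      · apply Finset.mem_image.mpr
        refine ⟨⟨i.1/2, by have := i.isLt; omega⟩, Finset.mem_univ _, ?_⟩
        rw [hembE]
        exact Fin.ext (by show 2*(i.1/2) = i.1; omega)
      · rw [Finset.card_image_of_injective _ hEinj, Finset.card_univ, Fintype.card_fin]
        omega
      · intro c hc c' hc' hex
        obtain ⟨j0, hj0S, hj0ne⟩ := hex
        have hcm : c ∈ cyclicCode F n (A * B) := hc
        have hcm' : c' ∈ cyclicCode F n (A * B) := hc'
        have hdmem : c - c' ∈ cyclicCode F n (A * B) :=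
          Submodule.sub_mem _ hcm hcm'
        obtain ⟨i0, _, hi0⟩ := Finset.mem_image.mp hj0S
        have hv0 : halfE h2m (c - c') ≠ 0 := by
          intro hz
          apply hj0ne
          have h1 : halfE h2m (c - c') i0 = 0 := by rw [hz]; rfl
          have h2 : c (embE i0) - c' (embE i0) = 0 := by
            rw [hembE]
            exact h1
          rw [← hi0]
          exact sub_eq_zero.mp h2
        have hwtv := hwge _ hv0 (fun j hj => (hEO (c - c') hdmem j hj).1)
        have hfilter : (Finset.univ.image embE).filter (fun j => c j ≠ c' j)
            = ((Finset.univ.filter (fun i' => c (embE i') ≠ c' (embE i'))).image embE) :=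
          Finset.filter_image
        rw [hfilter, Finset.card_image_of_injective _ hEinj]
        have hcongr : (Finset.univ.filter (fun i' => c (embE i') ≠ c' (embE i'))).card
            = wt (halfE h2m (c - c')) := by
          rw [wt]
          exact congrArg Finset.card (Finset.filter_congr (fun i' _ => by
            have hk : halfE h2m (c - c') i' = c (embE i') - c' (embE i') := by
              rw [hembE]; rfl
            rw [ne_eq, hk, sub_ne_zero]))
        rw [hcongr]
        exact hwtv
    · set embO : Fin (2*δ+1) → Fin n :=
        fun i' => (⟨2*i'.1+1, by have := i'.isLt; omega⟩ : Fin n) with hembO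
      have hOinj : Function.Injective embO := by
        intro a b h
        rw [hembO] at h
        have h2 : 2*a.1+1 = 2*b.1+1 := congrArg Fin.val h
        exact Fin.ext (by omega)
      refine ⟨Finset.univ.image embO, ?_, ?_, ?_⟩
      · apply Finset.mem_image.mpr
        refine ⟨⟨i.1/2, by have := i.isLt; omega⟩, Finset.mem_univ _, ?_⟩
        rw [hembO]
        exact Fin.ext (by show 2*(i.1/2)+1 = i.1; omega)
      · rw [Finset.card_image_of_injective _ hOinj, Finset.card_univ, Fintype.card_fin]
        omega
      · intro c hc c' hc' hex
        obtain ⟨j0, hj0S, hj0ne⟩ := hex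
        have hcm : c ∈ cyclicCode F n (A * B) := hc
        have hcm' : c' ∈ cyclicCode F n (A * B) := hc'
        have hdmem : c - c' ∈ cyclicCode F n (A * B) :=
          Submodule.sub_mem _ hcm hcm'
        obtain ⟨i0, _, hi0⟩ := Finset.mem_image.mp hj0S
        have hv0 : halfO h2m (c - c') ≠ 0 := by
          intro hz
          apply hj0ne
          have h1 : halfO h2m (c - c') i0 = 0 := by rw [hz]; rfl
          have h2 : c (embO i0) - c' (embO i0) = 0 := by
            rw [hembO]
            exact h1
          rw [← hi0]
          exact sub_eq_zero.mp h2
        have hwtv := hwge _ hv0 (fun j hj => (hEO (c - c') hdmem j hj).2)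
        have hfilter : (Finset.univ.image embO).filter (fun j => c j ≠ c' j)
            = ((Finset.univ.filter (fun i' => c (embO i') ≠ c' (embO i'))).image embO) :=
          Finset.filter_image
        rw [hfilter, Finset.card_image_of_injective _ hOinj]
        have hcongr : (Finset.univ.filter (fun i' => c (embO i') ≠ c' (embO i'))).card
            = wt (halfO h2m (c - c')) := by
          rw [wt]
          exact congrArg Finset.card (Finset.filter_congr (fun i' _ => by
            have hk : halfO h2m (c - c') i' = c (embO i') - c' (embO i') := by
              rw [hembO]; rfl
            rw [ne_eq, hk, sub_ne_zero]))
        rw [hcongr]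
        exact hwtv
  exact ⟨hloc, hdim, ⟨⟨wc, hwcmem, hwcne, hwcwt⟩,
    fun c hc hc0 => hlow c hc hc0⟩, hsing⟩
end
end
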